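/- arXiv:2403.08415 — 5 statements merged into one kernel-verified Lean document; each statement's English description precedes it below -/
import Mathlib

section
/- For every n ≥ 1, every word d₁…d_n ∈ Ω_{σ₁…σ_n}, and every a ∈ ℝ, the level-n square Φ^{σ₁…σ_n}_{d₁…d_n}(F₀) meets the line L_a if and only if Φ^{σ₁…σ_n}_{d₁…d_n}(F_σ) meets L_a. -/
open Set Filter

noncomputable section

/-- The digit set Ω₀. -/
def Dig0 : Finset (ℤ × ℤ) := {(0,0),(0,1),(0,2),(1,0),(1,2),(2,0),(2,1),(2,2)}

/-- The digit set Ω₁. -/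
def Dig1 : Finset (ℤ × ℤ) :=
  {(0,0),(0,1),(0,2),(0,3),(1,0),(1,3),(2,0),(2,1),(3,0),(3,1),(3,2),(3,3)}

/-- Ω indexed by a boolean (false = Ω₀, true = Ω₁). -/
def DigB : Bool → Finset (ℤ × ℤ)
  | false => Dig0
  | true => Dig1

/-- The contraction ratio denominator: 3 for the 0-system, 4 for the 1-system. -/
def ratioB : Bool → ℝ
  | false => 3
  | true => 4

/-- Maximal digit for the symbolic space: 2 when σ_i = 0, 3 when σ_i = 1. -/
def capB : Bool → ℕ
  | false => 2
  | true => 3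

/-- The maps Φ⁰_d (b = false) and Φ¹_d (b = true). -/
def Phi (b : Bool) (d : ℤ × ℤ) (p : ℝ × ℝ) : ℝ × ℝ :=
  ((p.1 + (d.1 : ℝ)) / ratioB b, (p.2 + (d.2 : ℝ)) / ratioB b)

/-- `cnt σ b k` = number of indices among the first k with σ-value b (i.e. n₀(k), n₁(k)). -/
def cnt (σ : ℕ → Bool) (b : Bool) (k : ℕ) : ℕ :=
  ((Finset.range k).filter (fun i => σ i = b)).card

/-- The scale 3^{n₀(k)}·4^{n₁(k)}. -/
def sc (σ : ℕ → Bool) (k : ℕ) : ℝ := 3 ^ cnt σ false k * 4 ^ cnt σ true k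

/-- The unit square F₀ = [0,1]². -/
def F0set : Set (ℝ × ℝ) := Set.Icc (0:ℝ) 1 ×ˢ Set.Icc (0:ℝ) 1

/-- The sets F_j of the Moran construction (σ j is the paper's σ_{j+1}). -/
def Fiter (σ : ℕ → Bool) : ℕ → Set (ℝ × ℝ)
  | 0 => F0set
  | j + 1 => ⋃ d ∈ DigB (σ j), Phi (σ j) d '' Fiter σ j

/-- The Sierpinski carpet with Moran structure F_σ = ⋂_{j ≥ 1} F_j. -/
def FMoran (σ : ℕ → Bool) : Set (ℝ × ℝ) := ⋂ j : ℕ, Fiter σ (j + 1)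

/-- The line L_a : y = (M/N)x + a. -/
def Lline (M N : ℕ) (a : ℝ) : Set (ℝ × ℝ) := {p | p.2 = (M : ℝ) / (N : ℝ) * p.1 + a}

/-- The interval J = [-M/N, 1]. -/
def Jset (M N : ℕ) : Set ℝ := Set.Icc (-(M : ℝ) / (N : ℝ)) 1

/-- The expanding maps T⁰_d (b = false) and T¹_d (b = true). -/
def Tmap (M N : ℕ) (b : Bool) (d : ℤ × ℤ) (x : ℝ) : ℝ :=
  ratioB b * x + (d.1 : ℝ) * ((M : ℝ) / (N : ℝ)) - (d.2 : ℝ)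

/-- The contracting maps S⁰_d (b = false) and S¹_d (b = true), inverses of T. -/
def Smap (M N : ℕ) (b : Bool) (d : ℤ × ℤ) (x : ℝ) : ℝ :=
  (x - (d.1 : ℝ) * ((M : ℝ) / (N : ℝ)) + (d.2 : ℝ)) / ratioB b

/-- Composition Φ^{σ₁…σ_n}_{d₁…d_n} = Φ^{σ₁}_{d₁} ∘ ⋯ ∘ Φ^{σ_n}_{d_n}. -/
def PhiComp (σ : ℕ → Bool) {n : ℕ} (w : Fin n → ℤ × ℤ) : ℝ × ℝ → ℝ × ℝ :=
  (List.ofFn (fun i : Fin n => Phi (σ i.1) (w i))).foldr (· ∘ ·) id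

/-- Composition S^{σ₁…σ_n}_{d₁…d_n} = S^{σ₁}_{d₁} ∘ ⋯ ∘ S^{σ_n}_{d_n}. -/
def Scomp (M N : ℕ) (σ : ℕ → Bool) {n : ℕ} (w : Fin n → ℤ × ℤ) : ℝ → ℝ :=
  (List.ofFn (fun i : Fin n => Smap M N (σ i.1) (w i))).foldr (· ∘ ·) id

/-- Composition T^{σ₁…σ_n}_{d₁…d_n} = T^{σ_n}_{d_n} ∘ ⋯ ∘ T^{σ₁}_{d₁}. -/
def Tcomp (M N : ℕ) (σ : ℕ → Bool) {n : ℕ} (w : Fin n → ℤ × ℤ) : ℝ → ℝ :=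
  (List.ofFn (fun i : Fin n => Tmap M N (σ i.1) (w i))).foldl (fun g f => f ∘ g) id

/-- N_n^σ(a): the number of admissible words of length n whose level-n square meets L_a. -/
def Ncount (M N : ℕ) (σ : ℕ → Bool) (n : ℕ) (a : ℝ) : ℕ :=
  Set.ncard {w : Fin n → ℤ × ℤ |
    (∀ i, w i ∈ DigB (σ i.1)) ∧ (PhiComp σ w '' F0set ∩ Lline M N a).Nonempty}

/-- Γ_x = {x + i/N : i ∈ ℤ} ∩ J. -/
def GammaSet (M N : ℕ) (x : ℝ) : Set ℝ :=
  {y | (∃ i : ℤ, y = x + (i : ℝ) / (N : ℝ)) ∧ y ∈ Jset M N}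

/-- The matrix A₀^j (1-based indices p, q correspond to the Fin values plus one). -/
def A0mat (M N : ℕ) (j : ℕ) : Matrix (Fin (N + M)) (Fin (N + M)) ℝ :=
  Matrix.of fun p q =>
    ((Dig0.filter (fun d => d.1 * (M : ℤ) - d.2 * (N : ℤ) =
        2 * (M : ℤ) + 2 + ((q : ℕ) + 1 : ℤ) - 3 * ((p : ℕ) + 1 : ℤ) - (j : ℤ))).card : ℝ)

/-- The matrix A₁^j. -/
def A1mat (M N : ℕ) (j : ℕ) : Matrix (Fin (N + M)) (Fin (N + M)) ℝ :=
  Matrix.of fun p q =>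
    ((Dig1.filter (fun d => d.1 * (M : ℤ) - d.2 * (N : ℤ) =
        3 * (M : ℤ) + 3 + ((q : ℕ) + 1 : ℤ) - 4 * ((p : ℕ) + 1 : ℤ) - (j : ℤ))).card : ℝ)

/-- A^j_b : A₀^j when b = false, A₁^j when b = true. -/
def Amat (M N : ℕ) : Bool → ℕ → Matrix (Fin (N + M)) (Fin (N + M)) ℝ
  | false => A0mat M N
  | true => A1mat M N

/-- The ordered matrix product A^{ξ₁}_{σ₁} A^{ξ₂}_{σ₂} ⋯ A^{ξ_k}_{σ_k}. -/
def Aprod (M N : ℕ) (σ : ℕ → Bool) (ξ : ℕ → ℕ) (k : ℕ) :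
    Matrix (Fin (N + M)) (Fin (N + M)) ℝ :=
  ((List.range k).map (fun i => Amat M N (σ i) (ξ i))).prod

/-- The matrix B_b(x), built from a chosen increasing enumeration Γe of the sets Γ_x. -/
def Bmat (M N : ℕ) (Γe : ℝ → Fin (N + M) → ℝ) (b : Bool) (x : ℝ) :
    Matrix (Fin (N + M)) (Fin (N + M)) ℝ :=
  Matrix.of fun p q =>
    (Set.ncard {d : ℤ × ℤ | d ∈ DigB b ∧ Tmap M N b d (Γe x p) = Γe (ratioB b * x) q} : ℝ)

/-- ‖X‖: the sum of all entries of a matrix. -/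
def mnorm {n : ℕ} (X : Matrix (Fin n) (Fin n) ℝ) : ℝ := ∑ p, ∑ q, X p q

/-- The least number of sets of diameter at most δ needed to cover E. -/
def coverNum (E : Set (ℝ × ℝ)) (δ : ℝ) : ℕ :=
  sInf {n : ℕ | ∃ S : Finset (Set (ℝ × ℝ)), S.card = n ∧
    (∀ s ∈ S, EMetric.diam s ≤ ENNReal.ofReal δ) ∧ E ⊆ ⋃ s ∈ S, s}

/-- The upper box dimension. -/
def uboxDim (E : Set (ℝ × ℝ)) : ℝ :=
  limsup (fun δ : ℝ => Real.log (coverNum E δ : ℝ) / (-Real.log δ))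
    (nhdsWithin (0 : ℝ) (Set.Ioi 0))

/-- The lower box dimension. -/
def lboxDim (E : Set (ℝ × ℝ)) : ℝ :=
  liminf (fun δ : ℝ => Real.log (coverNum E δ : ℝ) / (-Real.log δ))
    (nhdsWithin (0 : ℝ) (Set.Ioi 0))

/-- The finite words Σ_σ^k. -/
def wordsF (σ : ℕ → Bool) (k : ℕ) : Finset (Fin k → ℕ) :=
  Fintype.piFinset fun i => Finset.range (capB (σ i.1) + 1)

/-- A_ω for a finite word ω ∈ Σ_σ^k. -/
def AprodW (M N : ℕ) (σ : ℕ → Bool) {k : ℕ} (ω : Fin k → ℕ) :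
    Matrix (Fin (N + M)) (Fin (N + M)) ℝ :=
  (List.ofFn (fun i : Fin k => Amat M N (σ i.1) (ω i))).prod

/-- The pressure function P_A(q). -/
def PA (M N : ℕ) (σ : ℕ → Bool) (q : ℝ) : ℝ :=
  limsup (fun k : ℕ =>
    Real.log (∑ ω ∈ wordsF σ k, mnorm (AprodW M N σ ω) ^ q) / (k : ℝ)) atTop

/-- The level set E(α) of intercepts whose box-dimension limit equals α. -/
def Eset (M N : ℕ) (σ : ℕ → Bool) (α : ℝ) : Set ℝ :=
  {a | a ∈ Jset M N ∧ (∀ k : ℕ, ¬∃ m : ℤ, sc σ k * (N : ℝ) * a = (m : ℝ)) ∧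
    ∃ κ : ℕ, (1 ≤ κ ∧ κ ≤ N + M) ∧ ∃ ξ : ℕ → ℕ, (∀ i, ξ i ≤ capB (σ i)) ∧
      a = (-(M : ℝ) - 1 + (κ : ℝ)) / (N : ℝ) +
          1 / (N : ℝ) * ∑' i : ℕ, (ξ i : ℝ) / sc σ (i + 1) ∧
      Tendsto (fun k : ℕ => Real.log (mnorm (Aprod M N σ ξ k)) /
        ((cnt σ false k : ℝ) * Real.log 3 + (cnt σ true k : ℝ) * Real.log 4))
        atTop (nhds α)}

/-!
Each `PhiComp σ w` is a homothety with positive ratio, so it maps lines of slope `M / N` onto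
lines of slope `M / N`, and it suffices to compare `F₀` and `F_σ` themselves. Every digit set
contains `(0, k)` and `(k, 0)` for all `k` below the ratio, so each `F_j`, hence `F_σ`, contains
the left and bottom edges of `F₀`; and a line of nonnegative slope meeting `F₀` meets one of them.
-/

def leftBottomEdges : Set (ℝ × ℝ) :=
  ({0} ×ˢ Icc (0 : ℝ) 1) ∪ (Icc (0 : ℝ) 1 ×ˢ {0})

lemma ratioB_eq_capB_add_one (b : Bool) : ratioB b = capB b + 1 := by
  cases b <;> norm_num [ratioB, capB]

lemma ratioB_pos (b : Bool) : 0 < ratioB b := by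
  rw [ratioB_eq_capB_add_one]; positivity

lemma edge_digits_mem_DigB (b : Bool) {k : ℕ} (hk : k ≤ capB b) :
    ((0 : ℤ), (k : ℤ)) ∈ DigB b ∧ ((k : ℤ), (0 : ℤ)) ∈ DigB b := by
  cases b <;> simp only [capB] at hk <;> interval_cases k <;> decide

lemma DigB_bounds (b : Bool) {d : ℤ × ℤ} (hd : d ∈ DigB b) :
    0 ≤ d.1 ∧ d.1 ≤ capB b ∧ 0 ≤ d.2 ∧ d.2 ≤ capB b := by
  cases b <;> fin_cases hd <;> decide

lemma exists_digit_expansion {r : ℕ} (hr : 0 < r) {t : ℝ} (ht : t ∈ Icc (0 : ℝ) 1) :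
    ∃ k < r, ∃ s ∈ Icc (0 : ℝ) 1, t = (s + k) / r := by
  have hr' : (0 : ℝ) < r := by exact_mod_cast hr
  set k := min ⌊r * t⌋₊ (r - 1) with hk
  refine ⟨k, by omega, r * t - k, ⟨?_, ?_⟩, by field_simp; ring⟩
  · have : (k : ℝ) ≤ ⌊r * t⌋₊ := by exact_mod_cast min_le_left _ _
    linarith [Nat.floor_le (mul_nonneg hr'.le ht.1)]
  · rcases le_total ⌊r * t⌋₊ (r - 1) with h | h
    · rw [hk, min_eq_left h]
      linarith [Nat.lt_floor_add_one (r * t)]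
    · have : (k : ℝ) = r - 1 := by
        rw [hk, min_eq_right h, Nat.cast_sub hr, Nat.cast_one]
      nlinarith [ht.2]

lemma leftBottomEdges_subset_Fiter (σ : ℕ → Bool) (j : ℕ) : leftBottomEdges ⊆ Fiter σ j := by
  induction j with
  | zero =>
    exact union_subset (prod_mono (by simp) le_rfl) (prod_mono le_rfl (by simp))
  | succ j ih =>
    have hr : 0 < capB (σ j) + 1 := Nat.succ_pos _
    have hr' : ratioB (σ j) = ((capB (σ j) + 1 : ℕ) : ℝ) := by
      rw [ratioB_eq_capB_add_one]; push_cast; rfl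
    rintro ⟨x, y⟩ (⟨hx, hy⟩ | ⟨hx, hy⟩)
    · obtain ⟨k, hk, s, hs, rfl⟩ := exists_digit_expansion hr hy
      refine mem_biUnion (edge_digits_mem_DigB _ (Nat.lt_succ_iff.1 hk)).1
        ⟨(0, s), ih (Or.inl ⟨rfl, hs⟩), ?_⟩
      simp only [mem_singleton_iff] at hx
      simp [Phi, hx, hr']
    · obtain ⟨k, hk, s, hs, rfl⟩ := exists_digit_expansion hr hx
      refine mem_biUnion (edge_digits_mem_DigB _ (Nat.lt_succ_iff.1 hk)).2
        ⟨(s, 0), ih (Or.inr ⟨hs, rfl⟩), ?_⟩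
      simp only [mem_singleton_iff] at hy
      simp [Phi, hy, hr']

lemma leftBottomEdges_subset_FMoran (σ : ℕ → Bool) : leftBottomEdges ⊆ FMoran σ :=
  subset_iInter fun j => leftBottomEdges_subset_Fiter σ (j + 1)

lemma mapsTo_Phi_F0set {b : Bool} {d : ℤ × ℤ} (hd : d ∈ DigB b) :
    MapsTo (Phi b d) F0set F0set := by
  obtain ⟨h1, h2, h3, h4⟩ := DigB_bounds b hd
  have hr := ratioB_eq_capB_add_one b
  have h1' : (0 : ℝ) ≤ d.1 := by exact_mod_cast h1
  have h2' : (d.1 : ℝ) ≤ capB b := by exact_mod_cast h2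
  have h3' : (0 : ℝ) ≤ d.2 := by exact_mod_cast h3
  have h4' : (d.2 : ℝ) ≤ capB b := by exact_mod_cast h4
  rintro p ⟨⟨hx0, hx1⟩, hy0, hy1⟩
  refine ⟨⟨?_, ?_⟩, ?_, ?_⟩ <;> simp only [Phi, hr]
  all_goals first
    | exact div_nonneg (by linarith) (by positivity)
    | exact (div_le_one (by positivity)).2 (by linarith)

lemma FMoran_subset_F0set (σ : ℕ → Bool) : FMoran σ ⊆ F0set :=
  (iInter_subset _ 0).trans <| iUnion₂_subset fun _ hd => (mapsTo_Phi_F0set hd).image_subset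

/-- Since the slope `M / N` is nonnegative, a line meeting the unit square enters it through the
left or the bottom edge. -/
lemma leftBottomEdges_inter_Lline_nonempty {M N : ℕ} {a : ℝ}
    (h : (F0set ∩ Lline M N a).Nonempty) : (leftBottomEdges ∩ Lline M N a).Nonempty := by
  obtain ⟨⟨x, y⟩, ⟨⟨hx0, hx1⟩, hy0, hy1⟩, hL⟩ := h
  simp only [Lline, mem_ofPred_eq] at hL
  set m : ℝ := (M : ℝ) / (N : ℝ) with hm
  have hm0 : 0 ≤ m := by positivity
  rcases le_or_gt 0 a with ha | ha
  · exact ⟨(0, a), Or.inl ⟨rfl, ha, by nlinarith⟩, by simp [Lline]⟩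
  · have hm' : 0 < m := by nlinarith
    refine ⟨(-a / m, 0), Or.inr ⟨⟨div_nonneg (by linarith) hm'.le, ?_⟩, rfl⟩, ?_⟩
    · rw [div_le_one hm']; nlinarith
    · simp only [Lline, mem_ofPred_eq, ← hm]
      field_simp
      ring

lemma F0set_inter_Lline_nonempty_iff (σ : ℕ → Bool) (M N : ℕ) (a : ℝ) :
    (F0set ∩ Lline M N a).Nonempty ↔ (FMoran σ ∩ Lline M N a).Nonempty :=
  ⟨fun h => (leftBottomEdges_inter_Lline_nonempty h).mono
      (inter_subset_inter_left _ (leftBottomEdges_subset_FMoran σ)),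
    fun h => h.mono (inter_subset_inter_left _ (FMoran_subset_F0set σ))⟩

lemma PhiComp_succ (σ : ℕ → Bool) {n : ℕ} (w : Fin (n + 1) → ℤ × ℤ) :
    PhiComp σ w = Phi (σ 0) (w 0) ∘ PhiComp (fun i => σ (i + 1)) (fun i => w i.succ) := by
  simp only [PhiComp, List.ofFn_succ, List.foldr_cons]
  rfl

lemma PhiComp_eq_homothety (σ : ℕ → Bool) {n : ℕ} (w : Fin n → ℤ × ℤ) :
    ∃ ρ > (0 : ℝ), ∃ c : ℝ × ℝ, ∀ p, PhiComp σ w p = ρ • p + c := by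
  induction n generalizing σ with
  | zero => exact ⟨1, one_pos, 0, fun p => by simp [PhiComp]⟩
  | succ n ih =>
    obtain ⟨ρ, hρ, c, hc⟩ := ih (fun i => σ (i + 1)) (fun i => w i.succ)
    have hr := ratioB_pos (σ 0)
    refine ⟨ρ / ratioB (σ 0), by positivity,
      ((c.1 + (w 0).1) / ratioB (σ 0), (c.2 + (w 0).2) / ratioB (σ 0)), fun p => ?_⟩
    rw [PhiComp_succ, Function.comp_apply, hc]
    ext <;> simp only [Phi, Prod.fst_add, Prod.snd_add, Prod.smul_fst, Prod.smul_snd,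
      smul_eq_mul] <;> field_simp <;> ring

lemma preimage_homothety_Lline (M N : ℕ) {ρ : ℝ} (hρ : ρ ≠ 0) (c : ℝ × ℝ) (a : ℝ) :
    (fun p => ρ • p + c) ⁻¹' Lline M N a = Lline M N ((M / N * c.1 + a - c.2) / ρ) := by
  ext p
  simp only [Lline, mem_preimage, mem_ofPred_eq, Prod.fst_add, Prod.snd_add, Prod.smul_fst,
    Prod.smul_snd, smul_eq_mul]
  constructor <;> intro h
  · field_simp; linear_combination h
  · field_simp at h; linear_combination h

theorem stmt2_general (σ : ℕ → Bool) (M N : ℕ)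
    (n : ℕ) (w : Fin n → ℤ × ℤ) (a : ℝ) :
    (PhiComp σ w '' F0set ∩ Lline M N a).Nonempty ↔
      (PhiComp σ w '' FMoran σ ∩ Lline M N a).Nonempty := by
  obtain ⟨ρ, hρ, c, hc⟩ := PhiComp_eq_homothety σ w
  have hpre : PhiComp σ w ⁻¹' Lline M N a = Lline M N ((M / N * c.1 + a - c.2) / ρ) := by
    rw [funext hc, preimage_homothety_Lline M N hρ.ne']
  simp only [← image_inter_preimage, image_nonempty, hpre]
  exact F0set_inter_Lline_nonempty_iff σ M N _

/-- a level-n square meets L_a iff its copy of F_σ meets L_a. -/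
theorem stmt2 (σ : ℕ → Bool) (M N : ℕ) (hN : 1 ≤ N) (hMN : Nat.Coprime M N)
    (n : ℕ) (hn : 1 ≤ n) (w : Fin n → ℤ × ℤ) (hw : ∀ i, w i ∈ DigB (σ i.1)) (a : ℝ) :
    (PhiComp σ w '' F0set ∩ Lline M N a).Nonempty ↔
      (PhiComp σ w '' FMoran σ ∩ Lline M N a).Nonempty :=
  stmt2_general σ M N n w a
end
end

section
/- The interval J satisfies J = ⋃_{d∈Ω₀} S_d⁰(J) = ⋃_{d∈Ω₁} S_d¹(J). -/
open Set Filter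

noncomputable section

lemma key_mem (M N : ℕ) (b : Bool) (d : ℤ × ℤ) (x : ℝ)
    (h1 : -(M:ℝ) / (N:ℝ) ≤ ratioB b * x + (d.1:ℝ) * ((M:ℝ)/(N:ℝ)) - (d.2:ℝ))
    (h2 : ratioB b * x + (d.1:ℝ) * ((M:ℝ)/(N:ℝ)) - (d.2:ℝ) ≤ 1) :
    x ∈ Smap M N b d '' Jset M N := by
  refine ⟨ratioB b * x + (d.1:ℝ) * ((M:ℝ)/(N:ℝ)) - (d.2:ℝ), ⟨h1, h2⟩, ?_⟩
  cases b <;> simp only [Smap, ratioB] <;> ring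

lemma sub0l (M N : ℕ) : Jset M N ⊆ ⋃ d ∈ Dig0, Smap M N false d '' Jset M N := by
  have hm : (0:ℝ) ≤ (M:ℝ)/(N:ℝ) := by positivity
  have hneg : -(M:ℝ)/(N:ℝ) = -((M:ℝ)/(N:ℝ)) := neg_div _ _
  intro x hx
  obtain ⟨hx1, hx2⟩ := hx
  rw [hneg] at hx1
  simp only [Set.mem_iUnion]
  by_cases c1 : 3*x ≤ 1 - 2*((M:ℝ)/(N:ℝ))
  · exact ⟨(2,0), by simp [Dig0], key_mem M N false (2,0) x (by simp only [ratioB]; push_cast; linarith) (by simp only [ratioB]; push_cast; linarith)⟩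
  by_cases c2 : 3*x ≤ 2 - 2*((M:ℝ)/(N:ℝ))
  · exact ⟨(2,1), by simp [Dig0], key_mem M N false (2,1) x (by simp only [ratioB]; push_cast; linarith) (by simp only [ratioB]; push_cast; linarith)⟩
  by_cases c3 : 3*x ≤ 3 - 2*((M:ℝ)/(N:ℝ))
  · exact ⟨(2,2), by simp [Dig0], key_mem M N false (2,2) x (by simp only [ratioB]; push_cast; linarith) (by simp only [ratioB]; push_cast; linarith)⟩
  by_cases c4 : 3*x ≤ 1 - ((M:ℝ)/(N:ℝ))
  · exact ⟨(1,0), by simp [Dig0], key_mem M N false (1,0) x (by simp only [ratioB]; push_cast; linarith) (by simp only [ratioB]; push_cast; linarith)⟩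
  by_cases c5 : 3*x ≤ 1
  · exact ⟨(0,0), by simp [Dig0], key_mem M N false (0,0) x (by simp only [ratioB]; push_cast; linarith) (by simp only [ratioB]; push_cast; linarith)⟩
  by_cases c6 : 3*x ≤ 2
  · exact ⟨(0,1), by simp [Dig0], key_mem M N false (0,1) x (by simp only [ratioB]; push_cast; linarith) (by simp only [ratioB]; push_cast; linarith)⟩
  · exact ⟨(0,2), by simp [Dig0], key_mem M N false (0,2) x (by simp only [ratioB]; push_cast; linarith) (by simp only [ratioB]; push_cast; linarith)⟩

lemma sub0r (M N : ℕ) : (⋃ d ∈ Dig0, Smap M N false d '' Jset M N) ⊆ Jset M N := by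
  have hm : (0:ℝ) ≤ (M:ℝ)/(N:ℝ) := by positivity
  have hneg : -(M:ℝ)/(N:ℝ) = -((M:ℝ)/(N:ℝ)) := neg_div _ _
  intro x hx
  simp only [Set.mem_iUnion] at hx
  obtain ⟨d, hd, y, hy, rfl⟩ := hx
  obtain ⟨hy1, hy2⟩ := hy
  rw [hneg] at hy1
  simp only [Dig0, Finset.mem_insert, Finset.mem_singleton] at hd
  rcases hd with rfl|rfl|rfl|rfl|rfl|rfl|rfl|rfl <;>
  · simp only [Smap, ratioB, Jset, Set.mem_Icc]
    push_cast
    constructor <;> linarith [hneg]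

lemma sub1l (M N : ℕ) : Jset M N ⊆ ⋃ d ∈ Dig1, Smap M N true d '' Jset M N := by
  have hm : (0:ℝ) ≤ (M:ℝ)/(N:ℝ) := by positivity
  have hneg : -(M:ℝ)/(N:ℝ) = -((M:ℝ)/(N:ℝ)) := neg_div _ _
  intro x hx
  obtain ⟨hx1, hx2⟩ := hx
  rw [hneg] at hx1
  simp only [Set.mem_iUnion]
  by_cases c1 : 4*x ≤ 1 - 3*((M:ℝ)/(N:ℝ))
  · exact ⟨(3,0), by simp [Dig1], key_mem M N true (3,0) x (by simp only [ratioB]; push_cast; linarith) (by simp only [ratioB]; push_cast; linarith)⟩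
  by_cases c2 : 4*x ≤ 2 - 3*((M:ℝ)/(N:ℝ))
  · exact ⟨(3,1), by simp [Dig1], key_mem M N true (3,1) x (by simp only [ratioB]; push_cast; linarith) (by simp only [ratioB]; push_cast; linarith)⟩
  by_cases c3 : 4*x ≤ 3 - 3*((M:ℝ)/(N:ℝ))
  · exact ⟨(3,2), by simp [Dig1], key_mem M N true (3,2) x (by simp only [ratioB]; push_cast; linarith) (by simp only [ratioB]; push_cast; linarith)⟩
  by_cases c4 : 4*x ≤ 4 - 3*((M:ℝ)/(N:ℝ))
  · exact ⟨(3,3), by simp [Dig1], key_mem M N true (3,3) x (by simp only [ratioB]; push_cast; linarith) (by simp only [ratioB]; push_cast; linarith)⟩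
  by_cases c5 : 4*x ≤ 1 - 2*((M:ℝ)/(N:ℝ))
  · exact ⟨(2,0), by simp [Dig1], key_mem M N true (2,0) x (by simp only [ratioB]; push_cast; linarith) (by simp only [ratioB]; push_cast; linarith)⟩
  by_cases c6 : 4*x ≤ 2 - 2*((M:ℝ)/(N:ℝ))
  · exact ⟨(2,1), by simp [Dig1], key_mem M N true (2,1) x (by simp only [ratioB]; push_cast; linarith) (by simp only [ratioB]; push_cast; linarith)⟩
  by_cases c7 : 4*x ≤ 1 - ((M:ℝ)/(N:ℝ))
  · exact ⟨(1,0), by simp [Dig1], key_mem M N true (1,0) x (by simp only [ratioB]; push_cast; linarith) (by simp only [ratioB]; push_cast; linarith)⟩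
  by_cases c8 : 4*x ≤ 1
  · exact ⟨(0,0), by simp [Dig1], key_mem M N true (0,0) x (by simp only [ratioB]; push_cast; linarith) (by simp only [ratioB]; push_cast; linarith)⟩
  by_cases c9 : 4*x ≤ 2
  · exact ⟨(0,1), by simp [Dig1], key_mem M N true (0,1) x (by simp only [ratioB]; push_cast; linarith) (by simp only [ratioB]; push_cast; linarith)⟩
  by_cases c10 : 4*x ≤ 3
  · exact ⟨(0,2), by simp [Dig1], key_mem M N true (0,2) x (by simp only [ratioB]; push_cast; linarith) (by simp only [ratioB]; push_cast; linarith)⟩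
  · exact ⟨(0,3), by simp [Dig1], key_mem M N true (0,3) x (by simp only [ratioB]; push_cast; linarith) (by simp only [ratioB]; push_cast; linarith)⟩

lemma sub1r (M N : ℕ) : (⋃ d ∈ Dig1, Smap M N true d '' Jset M N) ⊆ Jset M N := by
  have hm : (0:ℝ) ≤ (M:ℝ)/(N:ℝ) := by positivity
  have hneg : -(M:ℝ)/(N:ℝ) = -((M:ℝ)/(N:ℝ)) := neg_div _ _
  intro x hx
  simp only [Set.mem_iUnion] at hx
  obtain ⟨d, hd, y, hy, rfl⟩ := hx
  obtain ⟨hy1, hy2⟩ := hy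
  rw [hneg] at hy1
  simp only [Dig1, Finset.mem_insert, Finset.mem_singleton] at hd
  rcases hd with rfl|rfl|rfl|rfl|rfl|rfl|rfl|rfl|rfl|rfl|rfl|rfl <;>
  · simp only [Smap, ratioB, Jset, Set.mem_Icc]
    push_cast
    constructor <;> linarith [hneg]

/-- J = ⋃_{d∈Ω₀} S_d⁰(J) = ⋃_{d∈Ω₁} S_d¹(J). -/
theorem stmt5 (M N : ℕ) (hN : 1 ≤ N) (hMN : Nat.Coprime M N) :
    Jset M N = ⋃ d ∈ Dig0, Smap M N false d '' Jset M N ∧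
    Jset M N = ⋃ d ∈ Dig1, Smap M N true d '' Jset M N :=
  ⟨Set.Subset.antisymm (sub0l M N) (sub0r M N),
   Set.Subset.antisymm (sub1l M N) (sub1r M N)⟩
end
end

section
/- Let a ∈ J satisfy 3^{n₀(k)}4^{n₁(k)}Na ∉ ℤ for all k ≥ 0, and let i₀(a) be the index with a = Γ_a(i₀(a)). Then for every n ≥ 1, N_n^σ(a) = ‖e_{i₀(a)} B_{σ₁}(a) B_{σ₂}(3^{n₀(1)}4^{n₁(1)}a) ⋯ B_{σ_n}(3^{n₀(n−1)}4^{n₁(n−1)}a)‖. -/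
open Set Filter

noncomputable section

open Classical in
/-- real-valued indicator of a proposition -/
def indR (P : Prop) : ℝ := if P then 1 else 0

lemma indR_true {P : Prop} (h : P) : indR P = 1 := by simp [indR, h]
lemma indR_false {P : Prop} (h : ¬ P) : indR P = 0 := by simp [indR, h]

lemma sum_indR {α : Type*} (s : Finset α) (p : α → Prop) [DecidablePred p] :
    ∑ x ∈ s, indR (p x) = ((s.filter p).card : ℝ) := by
  rw [← Finset.sum_boole]
  exact Finset.sum_congr rfl fun x _ => by by_cases h : p x <;> simp [indR, h]

lemma ncard_mem_filter {α : Type*} (s : Finset α) (p : α → Prop) [DecidablePred p] :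
    Set.ncard {x | x ∈ s ∧ p x} = (s.filter p).card := by
  rw [← Set.ncard_coe_finset]
  congr 1
  ext x
  simp

lemma cnt_succ (σ : ℕ → Bool) (b : Bool) (k : ℕ) :
    cnt σ b (k+1) = cnt σ b k + if σ k = b then 1 else 0 := by
  unfold cnt
  rw [Finset.range_add_one, Finset.filter_insert]
  split
  · rw [Finset.card_insert_of_notMem (by simp)]
  · simp

lemma sc_zero (σ : ℕ → Bool) : sc σ 0 = 1 := by simp [sc, cnt]

lemma sc_succ (σ : ℕ → Bool) (k : ℕ) : sc σ (k+1) = ratioB (σ k) * sc σ k := by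
  unfold sc
  rcases h : σ k with _ | _ <;>
    simp [cnt_succ, h, ratioB, pow_succ] <;> ring

lemma digB_bounds {b : Bool} {d : ℤ × ℤ} (hd : d ∈ DigB b) :
    0 ≤ d.1 ∧ d.1 ≤ (capB b : ℤ) ∧ 0 ≤ d.2 ∧ d.2 ≤ (capB b : ℤ) := by
  cases b <;> fin_cases hd <;> simp [capB]

lemma capB_eq (b : Bool) : (capB b : ℝ) = ratioB b - 1 := by
  cases b <;> norm_num [capB, ratioB]

lemma Tmap_pullback {M N : ℕ} (hN : 1 ≤ N) {b : Bool} {d : ℤ × ℤ} {x : ℝ}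
    (hd : d ∈ DigB b) (h : Tmap M N b d x ∈ Jset M N) : x ∈ Jset M N := by
  obtain ⟨h1, h2, h3, h4⟩ := digB_bounds hd
  have hr := ratioB_pos b
  have hNp : (0:ℝ) < N := by exact_mod_cast hN
  have hμ : (0:ℝ) ≤ (M:ℝ)/N := by positivity
  have c1 : (0:ℝ) ≤ (d.1:ℝ) := by exact_mod_cast h1
  have c2 : (d.1:ℝ) ≤ ratioB b - 1 := by
    rw [← capB_eq]; exact_mod_cast h2
  have c3 : (0:ℝ) ≤ (d.2:ℝ) := by exact_mod_cast h3
  have c4 : (d.2:ℝ) ≤ ratioB b - 1 := by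
    rw [← capB_eq]; exact_mod_cast h4
  simp only [Jset, Tmap, Set.mem_Icc] at h ⊢
  obtain ⟨ha, hb'⟩ := h
  have hM' : -(M:ℝ)/N = -((M:ℝ)/N) := by ring
  constructor
  · nlinarith [mul_nonneg (by linarith : (0:ℝ) ≤ ratioB b - 1 - d.1) hμ]
  · nlinarith [mul_nonneg c1 hμ]

lemma F0_line {M N : ℕ} (hN : 1 ≤ N) (c : ℝ) :
    (F0set ∩ Lline M N c).Nonempty ↔ c ∈ Jset M N := by
  have hNp : (0:ℝ) < N := by exact_mod_cast hN
  have hμ : (0:ℝ) ≤ (M:ℝ)/N := by positivity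
  constructor
  · rintro ⟨⟨x, y⟩, ⟨⟨hx0, hx1⟩, hy0, hy1⟩, hL⟩
    simp only [Lline, Set.mem_setOf_eq] at hL
    dsimp only at hx0 hx1 hy0 hy1
    have hneg : -(M:ℝ)/N = -((M:ℝ)/N) := neg_div _ _
    simp only [Jset, Set.mem_Icc]
    constructor
    · rw [hneg]; nlinarith [mul_le_mul_of_nonneg_left hx1 hμ]
    · nlinarith [mul_nonneg hμ hx0]
  · rintro ⟨hc1, hc2⟩
    by_cases hc : 0 ≤ c
    · exact ⟨(0, c), ⟨⟨le_rfl, zero_le_one⟩, hc, hc2⟩, by simp [Lline]⟩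
    · push_neg at hc
      have hM0 : (0:ℝ) < M := by
        rcases lt_or_eq_of_le (Nat.cast_nonneg (α := ℝ) M) with h | h
        · exact h
        · exfalso; rw [← h] at hc1; simp at hc1; linarith
      refine ⟨(-c * N / M, 0), ⟨⟨by have h0 : 0 < -c := by linarith
                                    positivity, ?_⟩, le_rfl, zero_le_one⟩, ?_⟩
      · rw [div_le_one hM0]
        have h1 : -(M:ℝ) ≤ c * N := by
          have := (div_le_iff₀ hNp).mp hc1
          linarith
        linarith
      · simp only [Lline, Set.mem_setOf_eq]
        field_simp
        ring

lemma Phi_line {M N : ℕ} (hN : 1 ≤ N) (b : Bool) (d : ℤ × ℤ) (p : ℝ × ℝ) (c : ℝ) :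
    Phi b d p ∈ Lline M N c ↔ p ∈ Lline M N (Tmap M N b d c) := by
  have hr : ratioB b ≠ 0 := ne_of_gt (ratioB_pos b)
  have hNp : (N:ℝ) ≠ 0 := by positivity
  simp only [Phi, Lline, Tmap, Set.mem_setOf_eq]
  constructor <;> intro h <;> field_simp at h ⊢
  · have h' : (p.2 + (d.2:ℝ)) * N = (M:ℝ) * (p.1 + d.1) + c * N * ratioB b :=
      by linear_combination h
    linear_combination h'
  · linear_combination h

lemma foldr_comp_apply {β : Type*} (l : List (β → β)) (g : β → β) (p : β) :
    (l.foldr (· ∘ ·) g) p = (l.foldr (· ∘ ·) id) (g p) := by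
  induction l with
  | nil => rfl
  | cons h t ih => simp [ih]

lemma Tcomp_nil (M N : ℕ) (σ : ℕ → Bool) (w : Fin 0 → ℤ × ℤ) (x : ℝ) :
    Tcomp M N σ w x = x := by
  simp [Tcomp]

lemma Tcomp_snoc (M N : ℕ) (σ : ℕ → Bool) {k : ℕ} (w : Fin k → ℤ × ℤ) (d : ℤ × ℤ) (x : ℝ) :
    Tcomp M N σ (Fin.snoc w d) x = Tmap M N (σ k) d (Tcomp M N σ w x) := by
  unfold Tcomp
  rw [List.ofFn_succ', List.concat_eq_append, List.foldl_concat]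
  simp [Fin.snoc_castSucc, Fin.snoc_last]

lemma PhiComp_nil (σ : ℕ → Bool) (w : Fin 0 → ℤ × ℤ) (p : ℝ × ℝ) :
    PhiComp σ w p = p := by
  simp [PhiComp]

lemma PhiComp_snoc (σ : ℕ → Bool) {k : ℕ} (w : Fin k → ℤ × ℤ) (d : ℤ × ℤ) (p : ℝ × ℝ) :
    PhiComp σ (Fin.snoc w d) p = PhiComp σ w (Phi (σ k) d p) := by
  unfold PhiComp
  rw [List.ofFn_succ', List.concat_eq_append, List.foldr_append]
  simp only [List.foldr_cons, List.foldr_nil, Fin.snoc_last]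
  rw [foldr_comp_apply]
  simp [Fin.snoc_castSucc]

lemma PhiComp_line {M N : ℕ} (hN : 1 ≤ N) (σ : ℕ → Bool) :
    ∀ {k : ℕ} (w : Fin k → ℤ × ℤ) (p : ℝ × ℝ) (c : ℝ),
      PhiComp σ w p ∈ Lline M N c ↔ p ∈ Lline M N (Tcomp M N σ w c) := by
  intro k
  induction k with
  | zero => intro w p c; rw [PhiComp_nil, Tcomp_nil]
  | succ k ih =>
    intro w p c
    rw [← Fin.snoc_init_self w, PhiComp_snoc, Tcomp_snoc,
      ih, Phi_line hN]

lemma nonempty_iff_Tcomp {M N : ℕ} (hN : 1 ≤ N) (σ : ℕ → Bool) {k : ℕ}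
    (w : Fin k → ℤ × ℤ) (a : ℝ) :
    (PhiComp σ w '' F0set ∩ Lline M N a).Nonempty ↔ Tcomp M N σ w a ∈ Jset M N := by
  rw [← F0_line hN]
  constructor
  · rintro ⟨y, ⟨p, hp, rfl⟩, hy⟩
    exact ⟨p, hp, (PhiComp_line hN σ w p a).1 hy⟩
  · rintro ⟨p, hp, hp2⟩
    exact ⟨PhiComp σ w p, ⟨p, hp, rfl⟩, (PhiComp_line hN σ w p a).2 hp2⟩

lemma Tcomp_lattice {M N : ℕ} (hN : 1 ≤ N) (σ : ℕ → Bool) (a : ℝ) :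
    ∀ {k : ℕ} (w : Fin k → ℤ × ℤ), (∀ i, w i ∈ DigB (σ i.1)) →
      ∃ i : ℤ, Tcomp M N σ w a = sc σ k * a + (i : ℝ) / N := by
  have hNp : (N:ℝ) ≠ 0 := by positivity
  intro k
  induction k with
  | zero =>
    intro w _
    exact ⟨0, by simp [Tcomp_nil, sc_zero]⟩
  | succ k ih =>
    intro w hw
    obtain ⟨i, hi⟩ := ih (Fin.init w) (fun i => hw i.castSucc)
    rw [← Fin.snoc_init_self w, Tcomp_snoc, hi]
    set d := w (Fin.last k) with hd
    rcases hσ : σ k with _ | _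
    · refine ⟨3 * i + d.1 * M - d.2 * N, ?_⟩
      rw [sc_succ, hσ]
      simp only [Tmap, ratioB]
      push_cast
      field_simp
      ring
    · refine ⟨4 * i + d.1 * M - d.2 * N, ?_⟩
      rw [sc_succ, hσ]
      simp only [Tmap, ratioB]
      push_cast
      field_simp
      ring

lemma sum_piFinset_snoc {α : Type*} [DecidableEq α] {k : ℕ}
    (f : Fin (k+1) → Finset α) (F : (Fin (k+1) → α) → ℝ) :
    ∑ w ∈ Fintype.piFinset f, F w
      = ∑ w ∈ Fintype.piFinset (fun i : Fin k => f i.castSucc),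
          ∑ d ∈ f (Fin.last k), F (Fin.snoc w d) := by
  rw [← Finset.sum_product']
  refine Finset.sum_nbij' (fun w => (Fin.init w, w (Fin.last k)))
    (fun p => Fin.snoc p.1 p.2) ?_ ?_ ?_ ?_ ?_
  · intro w hw
    rw [Finset.mem_product]
    refine ⟨Fintype.mem_piFinset.2 fun i => ?_, Fintype.mem_piFinset.1 hw _⟩
    exact Fintype.mem_piFinset.1 hw _
  · intro p hp
    rw [Finset.mem_product] at hp
    refine Fintype.mem_piFinset.2 fun i => ?_
    induction i using Fin.lastCases with
    | last => simpa using hp.2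
    | cast j => simpa using Fintype.mem_piFinset.1 hp.1 j
  · intro w _; exact Fin.snoc_init_self w
  · intro p _; simp [Fin.init_snoc, Fin.snoc_last]
  · intro w _; rw [Fin.snoc_init_self]

lemma indR_congr {P Q : Prop} (h : P ↔ Q) : indR P = indR Q := by
  by_cases hp : P
  · rw [indR_true hp, indR_true (h.1 hp)]
  · rw [indR_false hp, indR_false (fun hq => hp (h.2 hq))]

/-- N_n^σ(a) as the entry sum of a row of the product of the B matrices. -/
theorem stmt9 (σ : ℕ → Bool) (M N : ℕ) (hN : 1 ≤ N) (hMN : Nat.Coprime M N)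
    (a : ℝ) (haJ : a ∈ Jset M N)
    (hirr : ∀ k : ℕ, ¬∃ m : ℤ, sc σ k * (N : ℝ) * a = (m : ℝ))
    (Γe : ℝ → Fin (N + M) → ℝ)
    (hmono : ∀ k : ℕ, StrictMono (Γe (sc σ k * a)))
    (hrange : ∀ k : ℕ, Set.range (Γe (sc σ k * a)) = GammaSet M N (sc σ k * a))
    (i₀ : Fin (N + M)) (hi₀ : Γe (sc σ 0 * a) i₀ = a)
    (n : ℕ) (hn : 1 ≤ n) :
    (Ncount M N σ n a : ℝ) =
      ∑ q, (((List.range n).map (fun i => Bmat M N Γe (σ i) (sc σ i * a))).prod) i₀ q := by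
  classical
  have hGJ : ∀ (k : ℕ) (q : Fin (N+M)), Γe (sc σ k * a) q ∈ Jset M N := by
    intro k q
    have h : Γe (sc σ k * a) q ∈ Set.range (Γe (sc σ k * a)) := Set.mem_range_self q
    rw [hrange k] at h
    exact h.2
  have hinj : ∀ k : ℕ, Function.Injective (Γe (sc σ k * a)) :=
    fun k => (hmono k).injective
  have hex : ∀ (k : ℕ) (x : ℝ), x ∈ Jset M N → (∃ i : ℤ, x = sc σ k * a + (i:ℝ)/N) →
      ∃ q, Γe (sc σ k * a) q = x := by
    intro k x hxJ hlat
    have h : x ∈ GammaSet M N (sc σ k * a) := ⟨hlat, hxJ⟩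
    rw [← hrange k] at h
    exact h
  have part2 : ∀ (k : ℕ) (x : ℝ), (∃ i : ℤ, x = sc σ k * a + (i:ℝ)/N) →
      indR (x ∈ Jset M N) = ∑ q, indR (x = Γe (sc σ k * a) q) := by
    intro k x hlat
    by_cases hxJ : x ∈ Jset M N
    · obtain ⟨p₀, hp₀⟩ := hex k x hxJ hlat
      rw [indR_true hxJ, Finset.sum_eq_single p₀]
      · rw [indR_true hp₀.symm]
      · intro p _ hne
        exact indR_false fun h => hne (hinj k (hp₀.trans h)).symm
      · intro h; exact absurd (Finset.mem_univ p₀) h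
    · rw [indR_false hxJ, eq_comm]
      exact Finset.sum_eq_zero fun q _ =>
        indR_false fun h => hxJ (by rw [h]; exact hGJ k q)
  have part : ∀ (k : ℕ) (x : ℝ), (∃ i : ℤ, x = sc σ k * a + (i:ℝ)/N) →
      ∀ d ∈ DigB (σ k), ∀ q : Fin (N+M),
        indR (Tmap M N (σ k) d x = Γe (sc σ (k+1) * a) q)
          = ∑ p, indR (x = Γe (sc σ k * a) p)
              * indR (Tmap M N (σ k) d (Γe (sc σ k * a) p) = Γe (sc σ (k+1) * a) q) := by
    intro k x hlat d hd q
    by_cases hxJ : x ∈ Jset M N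
    · obtain ⟨p₀, hp₀⟩ := hex k x hxJ hlat
      rw [Finset.sum_eq_single p₀]
      · rw [indR_true hp₀.symm, one_mul, hp₀]
      · intro p _ hne
        rw [indR_false (fun h => hne (hinj k (hp₀.trans h)).symm), zero_mul]
      · intro h; exact absurd (Finset.mem_univ p₀) h
    · have hT : ¬ (Tmap M N (σ k) d x = Γe (sc σ (k+1) * a) q) := by
        intro h
        exact hxJ (Tmap_pullback hN hd (by rw [h]; exact hGJ (k+1) q))
      rw [indR_false hT, eq_comm]
      refine Finset.sum_eq_zero fun p _ => ?_
      rw [indR_false (fun h => hxJ (by rw [h]; exact hGJ k p)), zero_mul]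
  have hB : ∀ (k : ℕ) (p q : Fin (N+M)),
      Bmat M N Γe (σ k) (sc σ k * a) p q
        = ∑ d ∈ DigB (σ k),
            indR (Tmap M N (σ k) d (Γe (sc σ k * a) p) = Γe (sc σ (k+1) * a) q) := by
    intro k p q
    have hsc : ratioB (σ k) * (sc σ k * a) = sc σ (k+1) * a := by
      rw [sc_succ]; ring
    simp only [Bmat, Matrix.of_apply, hsc]
    rw [ncard_mem_filter]
    exact (sum_indR _ _).symm
  have key : ∀ k : ℕ, ∀ q : Fin (N+M),
      (((List.range k).map (fun i => Bmat M N Γe (σ i) (sc σ i * a))).prod) i₀ q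
        = ∑ w ∈ Fintype.piFinset (fun i : Fin k => DigB (σ i.1)),
            indR (Tcomp M N σ w a = Γe (sc σ k * a) q) := by
    intro k
    induction k with
    | zero =>
      intro q
      simp only [List.range_zero, List.map_nil, List.prod_nil, Matrix.one_apply]
      rw [Finset.sum_congr rfl (fun w _ =>
        indR_congr (by rw [Tcomp_nil M N σ w a]))]
      have hcard : (Fintype.piFinset (fun i : Fin 0 => DigB (σ i.1))).card = 1 := by
        rw [Fintype.card_piFinset]; simp
      rw [Finset.sum_const, hcard, one_smul]
      by_cases h : i₀ = q
      · subst h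
        rw [if_pos rfl]
        exact (indR_true hi₀.symm).symm
      · rw [if_neg h]
        exact (indR_false fun hh => h (hinj 0 (by rw [hi₀]; exact hh))).symm
    | succ k ih =>
      intro q
      have hstep : ∀ w ∈ Fintype.piFinset (fun i : Fin k => DigB (σ i.1)),
          (∑ d ∈ DigB (σ k), indR (Tcomp M N σ (Fin.snoc w d) a = Γe (sc σ (k+1) * a) q))
          = ∑ p, indR (Tcomp M N σ w a = Γe (sc σ k * a) p) *
              Bmat M N Γe (σ k) (sc σ k * a) p q := by
        intro w hw
        have hlat := Tcomp_lattice (M := M) hN σ a w (fun i => Fintype.mem_piFinset.1 hw i)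
        calc ∑ d ∈ DigB (σ k), indR (Tcomp M N σ (Fin.snoc w d) a = Γe (sc σ (k+1) * a) q)
            = ∑ d ∈ DigB (σ k), ∑ p, indR (Tcomp M N σ w a = Γe (sc σ k * a) p) *
                indR (Tmap M N (σ k) d (Γe (sc σ k * a) p) = Γe (sc σ (k+1) * a) q) := by
              refine Finset.sum_congr rfl fun d hd => ?_
              rw [Tcomp_snoc]
              exact part k _ hlat d hd q
          _ = ∑ p, indR (Tcomp M N σ w a = Γe (sc σ k * a) p) *
                ∑ d ∈ DigB (σ k),
                  indR (Tmap M N (σ k) d (Γe (sc σ k * a) p) = Γe (sc σ (k+1) * a) q) := by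
              rw [Finset.sum_comm]
              exact Finset.sum_congr rfl fun p _ => (Finset.mul_sum _ _ _).symm
          _ = _ := Finset.sum_congr rfl fun p _ => by rw [hB k p q]
      have hsnoc := sum_piFinset_snoc (fun i : Fin (k+1) => DigB (σ i.1))
        (fun w => indR (Tcomp M N σ w a = Γe (sc σ (k+1) * a) q))
      rw [List.range_succ, List.map_append, List.prod_append, List.map_cons,
        List.map_nil, List.prod_cons, List.prod_nil, mul_one, Matrix.mul_apply, hsnoc]
      have hfin : (∑ w ∈ Fintype.piFinset (fun i : Fin k => DigB (σ i.1)),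
          ∑ d ∈ DigB (σ k), indR (Tcomp M N σ (Fin.snoc w d) a = Γe (sc σ (k+1) * a) q))
          = ∑ p, (((List.range k).map (fun i => Bmat M N Γe (σ i) (sc σ i * a))).prod) i₀ p *
              Bmat M N Γe (σ k) (sc σ k * a) p q := by
        rw [Finset.sum_congr rfl hstep, Finset.sum_comm]
        exact Finset.sum_congr rfl fun p _ => by rw [← Finset.sum_mul, ih p]
      exact hfin.symm
  have hset : {w : Fin n → ℤ × ℤ | (∀ i, w i ∈ DigB (σ i.1)) ∧
        (PhiComp σ w '' F0set ∩ Lline M N a).Nonempty}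
      = ↑((Fintype.piFinset (fun i : Fin n => DigB (σ i.1))).filter
          (fun w => (PhiComp σ w '' F0set ∩ Lline M N a).Nonempty)) := by
    ext w
    simp [Fintype.mem_piFinset]
  have h1 : (Ncount M N σ n a : ℝ)
      = ∑ w ∈ Fintype.piFinset (fun i : Fin n => DigB (σ i.1)),
          indR ((PhiComp σ w '' F0set ∩ Lline M N a).Nonempty) := by
    simp only [Ncount]
    rw [hset, Set.ncard_coe_finset, sum_indR]
  rw [h1]
  have h2 : ∀ w ∈ Fintype.piFinset (fun i : Fin n => DigB (σ i.1)),
      indR ((PhiComp σ w '' F0set ∩ Lline M N a).Nonempty)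
        = ∑ q, indR (Tcomp M N σ w a = Γe (sc σ n * a) q) := by
    intro w hw
    rw [indR_congr (nonempty_iff_Tcomp hN σ w a)]
    exact part2 n _ (Tcomp_lattice (M := M) hN σ a w (fun i => Fintype.mem_piFinset.1 hw i))
  rw [Finset.sum_congr rfl h2, Finset.sum_comm]
  exact Finset.sum_congr rfl fun q _ => (key n q).symm
end
end

section
/- Let a ∈ J with Na ∉ ℤ. If j ∈ {0,1,2}, 3Na ∉ ℤ, and the fractional part of Na lies in (j/3, (j+1)/3), then B₀(a) = A₀^j. If j ∈ {0,1,2,3}, 4Na ∉ ℤ, and the fractional part of Na lies in (j/4, (j+1)/4), then B₁(a) = A₁^j. -/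
open Set Filter

noncomputable section

/-!
For `N x ∉ ℤ` the set `Γ_x` is the part of the progression `x + ℤ/N` lying in `J`; with
`θ = fract (N x)` its points are `(p - M + θ)/N` for `p = 0, …, N + M - 1`. If `θ` lies in
`(j/r, (j+1)/r)` then `fract (N · r x) = r θ - j`, and the equation `T_d(Γ_a(p)) = Γ_{ra}(q)`
becomes, after multiplying by `N`, the integer equation `d¹M - d²N + r p + M = q + r M - j`,
in which `a` no longer appears.
-/

/-- The increasing enumeration of `Γ_x`, indexed from `0`: `gammaEnum M N x p = Γ_x(p + 1)`. -/
def gammaEnum (M N : ℕ) (x : ℝ) (p : Fin (N + M)) : ℝ :=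
  ((p : ℕ) - M + Int.fract ((N : ℝ) * x)) / N

section GammaSet

variable {M N : ℕ} {x : ℝ}

lemma strictMono_gammaEnum (hN : 0 < N) : StrictMono (gammaEnum M N x) := fun p q hpq => by
  have hN' : (0 : ℝ) < N := by exact_mod_cast hN
  have hpq' : ((p : ℕ) : ℝ) < (q : ℕ) := by exact_mod_cast hpq
  unfold gammaEnum
  gcongr

lemma gammaEnum_mem_gammaSet (hN : 0 < N) (p : Fin (N + M)) :
    gammaEnum M N x p ∈ GammaSet M N x := by
  have hN' : (0 : ℝ) < N := by exact_mod_cast hN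
  have hNx : (N : ℝ) * x = ⌊(N : ℝ) * x⌋ + Int.fract ((N : ℝ) * x) :=
    (Int.floor_add_fract _).symm
  have hθ0 := Int.fract_nonneg ((N : ℝ) * x)
  have hθ1 := Int.fract_lt_one ((N : ℝ) * x)
  have hp : ((p : ℕ) : ℝ) + 1 ≤ N + M := by exact_mod_cast p.isLt
  refine ⟨⟨(p : ℕ) - M - ⌊(N : ℝ) * x⌋, ?_⟩, ?_, ?_⟩
  · rw [gammaEnum]
    push_cast
    field_simp
    linarith
  · rw [gammaEnum, div_le_div_iff_of_pos_right hN']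
    linarith [(p : ℕ).cast_nonneg (α := ℝ)]
  · rw [gammaEnum, div_le_one hN']
    linarith

lemma mem_range_gammaEnum (hN : 0 < N) (hx : 0 < Int.fract ((N : ℝ) * x)) {y : ℝ}
    (hy : y ∈ GammaSet M N x) : y ∈ Set.range (gammaEnum M N x) := by
  have hN' : (0 : ℝ) < N := by exact_mod_cast hN
  obtain ⟨⟨i, rfl⟩, hlo, hhi⟩ := hy
  set θ := Int.fract ((N : ℝ) * x)
  set k : ℤ := ⌊(N : ℝ) * x⌋ + i
  have hk : x + i / N = (k + θ) / N := by
    rw [eq_div_iff hN'.ne', add_mul, div_mul_cancel₀ _ hN'.ne']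
    push_cast [k]
    linarith [Int.floor_add_fract ((N : ℝ) * x)]
  rw [hk, div_le_div_iff_of_pos_right hN'] at hlo
  rw [hk, div_le_one hN'] at hhi
  have hk_lo : -(M : ℤ) ≤ k := by
    have : (-(M : ℤ) - 1 : ℝ) < k := by
      push_cast
      linarith [Int.fract_lt_one ((N : ℝ) * x)]
    exact Int.le_of_sub_one_lt (by exact_mod_cast this)
  -- `θ > 0` excludes `k = N`, which would be an (N + M + 1)-st point.
  have hk_hi : k < N := by
    have : (k : ℝ) < N := by linarith
    exact_mod_cast this
  have hkM : (((k + M).toNat : ℕ) : ℝ) = k + M := by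
    exact_mod_cast Int.toNat_of_nonneg (by omega : 0 ≤ k + M)
  refine ⟨⟨(k + M).toNat, by omega⟩, ?_⟩
  rw [gammaEnum, hkM, hk]
  ring

lemma range_gammaEnum (hN : 0 < N) (hx : 0 < Int.fract ((N : ℝ) * x)) :
    Set.range (gammaEnum M N x) = GammaSet M N x :=
  Set.Subset.antisymm (Set.range_subset_iff.mpr (gammaEnum_mem_gammaSet hN))
    fun _ hy => mem_range_gammaEnum hN hx hy

lemma eq_gammaEnum_of_strictMono (hN : 0 < N) (hx : 0 < Int.fract ((N : ℝ) * x))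
    {g : Fin (N + M) → ℝ} (hg : StrictMono g) (hrange : Set.range g = GammaSet M N x) :
    g = gammaEnum M N x :=
  (hg.range_inj (strictMono_gammaEnum hN)).mp (hrange.trans (range_gammaEnum hN hx).symm)

end GammaSet

lemma Int.fract_natCast_mul_of_mem_Ioo {α : Type*} [Field α] [LinearOrder α]
    [IsStrictOrderedRing α] [FloorRing α] {y : α} {r j : ℕ}
    (h : Int.fract y ∈ Set.Ioo ((j : α) / r) (((j : α) + 1) / r)) :
    Int.fract ((r : α) * y) = r * Int.fract y - j := by
  obtain ⟨hlo, hhi⟩ := h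
  have hr : (0 : α) < r := by
    rcases r.eq_zero_or_pos with rfl | hr
    · simp only [Nat.cast_zero, div_zero] at hlo hhi
      linarith
    · exact_mod_cast hr
  rw [div_lt_iff₀' hr] at hlo
  rw [lt_div_iff₀' hr] at hhi
  rw [Int.fract_eq_iff]
  refine ⟨by linarith, by linarith, r * ⌊y⌋ + j, ?_⟩
  push_cast
  rw [← Int.self_sub_fract y]
  ring

lemma tmap_gammaEnum_eq_iff {M N : ℕ} (hN : 0 < N) (r j p q : ℕ) (θ : ℝ) (d : ℤ × ℤ) :
    (r : ℝ) * ((p - M + θ) / N) + d.1 * ((M : ℝ) / N) - d.2 = (q - M + (r * θ - j)) / N ↔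
      d.1 * M - d.2 * N + r * p + M = (q + r * M - j : ℤ) := by
  have hN' : (N : ℝ) ≠ 0 := by positivity
  rw [← Int.cast_inj (α := ℝ)]
  push_cast
  constructor <;> intro h
  · field_simp at h
    linarith
  · field_simp
    linarith

theorem Bmat_apply_of_fract_mem_Ioo {M N : ℕ} (hN : 0 < N) {Γe : ℝ → Fin (N + M) → ℝ}
    {b : Bool} {r : ℕ} (hr : ratioB b = r) {a : ℝ} {j : ℕ}
    (hfr : Int.fract ((N : ℝ) * a) ∈ Set.Ioo ((j : ℝ) / r) (((j : ℝ) + 1) / r))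
    (hmono : StrictMono (Γe a)) (hrange : Set.range (Γe a) = GammaSet M N a)
    (hmono' : StrictMono (Γe (r * a))) (hrange' : Set.range (Γe (r * a)) = GammaSet M N (r * a))
    (p q : Fin (N + M)) :
    Bmat M N Γe b a p q =
      ((DigB b).filter fun d => d.1 * M - d.2 * N + r * p + M = (q + r * M - j : ℤ)).card := by
  have hr_pos : (0 : ℝ) < r := hr ▸ by cases b <;> norm_num [ratioB]
  have hfr' : Int.fract ((N : ℝ) * (r * a)) = r * Int.fract ((N : ℝ) * a) - j := by
    rw [mul_left_comm, Int.fract_natCast_mul_of_mem_Ioo hfr]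
  have hpos : 0 < Int.fract ((N : ℝ) * a) :=
    (div_nonneg j.cast_nonneg r.cast_nonneg).trans_lt hfr.1
  have hpos' : 0 < Int.fract ((N : ℝ) * (r * a)) := by
    rw [hfr', sub_pos, ← div_lt_iff₀' hr_pos]
    exact hfr.1
  rw [Bmat, Matrix.of_apply, hr, eq_gammaEnum_of_strictMono hN hpos hmono hrange,
    eq_gammaEnum_of_strictMono hN hpos' hmono' hrange', ← Finset.coe_filter, Set.ncard_coe_finset]
  congr 2
  refine Finset.filter_congr fun d _ => ?_
  rw [Tmap, hr, gammaEnum, gammaEnum, hfr']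
  exact tmap_gammaEnum_eq_iff hN r j p q _ d

theorem stmt10_general (M N : ℕ) (hN : 1 ≤ N) (a : ℝ) (Γe : ℝ → Fin (N + M) → ℝ)
    (hmonoa : StrictMono (Γe a)) (hrangea : Set.range (Γe a) = GammaSet M N a) :
    (∀ j : ℕ, j ≤ 2 → (¬∃ m : ℤ, 3 * (N : ℝ) * a = (m : ℝ)) →
      StrictMono (Γe (3 * a)) → Set.range (Γe (3 * a)) = GammaSet M N (3 * a) →
      Int.fract ((N : ℝ) * a) ∈ Set.Ioo ((j : ℝ) / 3) (((j : ℝ) + 1) / 3) →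
      Bmat M N Γe false a = A0mat M N j) ∧
    (∀ j : ℕ, j ≤ 3 → (¬∃ m : ℤ, 4 * (N : ℝ) * a = (m : ℝ)) →
      StrictMono (Γe (4 * a)) → Set.range (Γe (4 * a)) = GammaSet M N (4 * a) →
      Int.fract ((N : ℝ) * a) ∈ Set.Ioo ((j : ℝ) / 4) (((j : ℝ) + 1) / 4) →
      Bmat M N Γe true a = A1mat M N j) := by
  refine ⟨fun j _ _ hmono3 hrange3 hfr => ?_, fun j _ _ hmono4 hrange4 hfr => ?_⟩
  · ext p q
    rw [Bmat_apply_of_fract_mem_Ioo (r := 3) hN (by simp [ratioB]) (by simpa using hfr) hmonoa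
      hrangea (by simpa using hmono3) (by simpa using hrange3), A0mat, Matrix.of_apply]
    congr 2
    exact Finset.filter_congr fun d _ => by push_cast; constructor <;> intro h <;> linarith
  · ext p q
    rw [Bmat_apply_of_fract_mem_Ioo (r := 4) hN (by simp [ratioB]) (by simpa using hfr) hmonoa
      hrangea (by simpa using hmono4) (by simpa using hrange4), A1mat, Matrix.of_apply]
    congr 2
    exact Finset.filter_congr fun d _ => by push_cast; constructor <;> intro h <;> linarith

/-- B₀(a) = A₀^j and B₁(a) = A₁^j according to the fractional part of Na. -/
theorem stmt10 (M N : ℕ) (hN : 1 ≤ N) (hMN : Nat.Coprime M N)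
    (a : ℝ) (haJ : a ∈ Jset M N) (hNa : ¬∃ m : ℤ, (N : ℝ) * a = (m : ℝ))
    (Γe : ℝ → Fin (N + M) → ℝ)
    (hmonoa : StrictMono (Γe a)) (hrangea : Set.range (Γe a) = GammaSet M N a) :
    (∀ j : ℕ, j ≤ 2 → (¬∃ m : ℤ, 3 * (N : ℝ) * a = (m : ℝ)) →
      StrictMono (Γe (3 * a)) → Set.range (Γe (3 * a)) = GammaSet M N (3 * a) →
      Int.fract ((N : ℝ) * a) ∈ Set.Ioo ((j : ℝ) / 3) (((j : ℝ) + 1) / 3) →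
      Bmat M N Γe false a = A0mat M N j) ∧
    (∀ j : ℕ, j ≤ 3 → (¬∃ m : ℤ, 4 * (N : ℝ) * a = (m : ℝ)) →
      StrictMono (Γe (4 * a)) → Set.range (Γe (4 * a)) = GammaSet M N (4 * a) →
      Int.fract ((N : ℝ) * a) ∈ Set.Ioo ((j : ℝ) / 4) (((j : ℝ) + 1) / 4) →
      Bmat M N Γe true a = A1mat M N j) :=
  stmt10_general M N hN a Γe hmonoa hrangea
end
end

section
/- Let a ∈ J satisfy 3^{n₀(k)}4^{n₁(k)}Na ∉ ℤ for all k ≥ 0, with greedy expansion digits (ξ_i), and let i₀(a) be the index with a = Γ_a(i₀(a)). Then for every n ≥ 1, N_n^σ(a) = ‖e_{i₀(a)} A^{ξ₁}_{σ₁} A^{ξ₂}_{σ₂} ⋯ A^{ξ_n}_{σ_n}‖. -/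
open Set Filter

noncomputable section

namespace Stmt11Aux

/-! ### Basic arithmetic on ratios, counts, scales -/

def rI (b : Bool) : ℤ := bif b then 4 else 3

lemma ratioB_cast (b : Bool) : ratioB b = ((rI b : ℤ) : ℝ) := by
  cases b <;> norm_num [ratioB, rI]

lemma rI_pos (b : Bool) : 0 < rI b := by cases b <;> norm_num [rI]

lemma ratioB_pos' (b : Bool) : (0:ℝ) < ratioB b := by cases b <;> norm_num [ratioB]

lemma capB_cast (b : Bool) : (capB b : ℤ) = rI b - 1 := by cases b <;> norm_num [capB, rI]

lemma cnt_succ (σ : ℕ → Bool) (b : Bool) (k : ℕ) :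
    cnt σ b (k + 1) = cnt σ b k + (if σ k = b then 1 else 0) := by
  unfold cnt
  rw [Finset.range_add_one, Finset.filter_insert]
  split_ifs with h
  · rw [Finset.card_insert_of_notMem (by simp)]
  · simp

lemma sc_zero (σ : ℕ → Bool) : sc σ 0 = 1 := by simp [sc, cnt]

lemma sc_succ (σ : ℕ → Bool) (k : ℕ) : sc σ (k + 1) = ratioB (σ k) * sc σ k := by
  cases h : σ k <;>
    simp [sc, cnt_succ, h, ratioB, pow_succ] <;> ring

lemma sc_pos (σ : ℕ → Bool) (k : ℕ) : 0 < sc σ k := by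
  unfold sc; positivity

lemma cnt_add (σ : ℕ → Bool) (k : ℕ) : cnt σ false k + cnt σ true k = k := by
  unfold cnt
  have h := Finset.card_filter_add_card_filter_not
    (p := fun i => σ i = false) (s := Finset.range k)
  rw [Finset.card_range] at h
  have h2 : Finset.filter (fun i => σ i = true) (Finset.range k)
      = Finset.filter (fun i => ¬ σ i = false) (Finset.range k) := by
    apply Finset.filter_congr
    intro i _
    simp
  rw [h2]
  exact h

lemma sc_ge (σ : ℕ → Bool) (k : ℕ) : (3 : ℝ) ^ k ≤ sc σ k := by
  have h : (3:ℝ)^k = 3 ^ cnt σ false k * 3 ^ cnt σ true k := by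
    rw [← pow_add, cnt_add]
  have h2 : (3:ℝ) ^ cnt σ false k * 3 ^ cnt σ true k
      ≤ 3 ^ cnt σ false k * 4 ^ cnt σ true k := by
    apply mul_le_mul_of_nonneg_left _ (by positivity)
    exact pow_le_pow_left₀ (by norm_num) (by norm_num) _
  rw [h]
  unfold sc
  exact h2

/-! ### The tail series -/

section Series

variable (σ : ℕ → Bool) (ξ : ℕ → ℕ)

lemma summable_g (hξ : ∀ i, ξ i ≤ capB (σ i)) :
    Summable (fun i => (ξ i : ℝ) / sc σ (i + 1)) := by
  have hg : Summable (fun i : ℕ => (1/3 : ℝ) ^ i) :=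
    summable_geometric_of_lt_one (by norm_num) (by norm_num)
  apply Summable.of_nonneg_of_le
    (fun i => div_nonneg (by positivity) (sc_pos σ (i+1)).le) _ hg
  intro i
  · have h1 : (ξ i : ℝ) ≤ 3 := by
      have h0 := hξ i
      have : ξ i ≤ 3 := le_trans h0 (by cases σ i <;> norm_num [capB])
      exact_mod_cast this
    have h2 : (3:ℝ)^(i+1) ≤ sc σ (i+1) := sc_ge σ (i+1)
    have h3 : (0:ℝ) < 3^(i+1) := by positivity
    calc (ξ i : ℝ) / sc σ (i+1) ≤ 3 / 3^(i+1) := by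
          exact div_le_div₀ (by norm_num) h1 h3 h2
    _ = (1/3:ℝ)^i := by rw [pow_succ]; field_simp; rw [← mul_pow]; norm_num

def tl (k : ℕ) : ℝ := ∑' i, (ξ (k + i) : ℝ) / sc σ (k + i + 1)

def th (k : ℕ) : ℝ := sc σ k * tl σ ξ k

lemma summable_tl (hξ : ∀ i, ξ i ≤ capB (σ i)) (k : ℕ) :
    Summable (fun i => (ξ (k + i) : ℝ) / sc σ (k + i + 1)) := by
  have h := (summable_nat_add_iff (f := fun i => (ξ i : ℝ) / sc σ (i + 1)) k).2
    (summable_g σ ξ hξ)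
  apply h.congr
  intro i
  rw [Nat.add_comm i k]

lemma tl_rec (hξ : ∀ i, ξ i ≤ capB (σ i)) (k : ℕ) :
    tl σ ξ k = (ξ k : ℝ) / sc σ (k + 1) + tl σ ξ (k + 1) := by
  unfold tl
  have h1 : ∑' (b : ℕ), (ξ (k + (b + 1)) : ℝ) / sc σ (k + (b + 1) + 1)
      = ∑' (i : ℕ), (ξ (k + 1 + i) : ℝ) / sc σ (k + 1 + i + 1) := by
    apply tsum_congr
    intro b
    rw [show k + (b + 1) = k + 1 + b from by omega]
  rw [Summable.tsum_eq_zero_add (summable_tl σ ξ hξ k), h1]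
  norm_num

lemma th_rec (hξ : ∀ i, ξ i ≤ capB (σ i)) (k : ℕ) :
    ratioB (σ k) * th σ ξ k = (ξ k : ℝ) + th σ ξ (k + 1) := by
  unfold th
  rw [tl_rec σ ξ hξ k]
  have hk1 := (sc_pos σ (k+1)).ne'
  have hs : sc σ (k+1) = ratioB (σ k) * sc σ k := sc_succ σ k
  have hr := (ratioB_pos' (σ k)).ne'
  have hk := (sc_pos σ k).ne'
  rw [hs]
  field_simp

lemma th_nonneg (k : ℕ) : 0 ≤ th σ ξ k := by
  unfold th tl
  apply mul_nonneg (sc_pos σ k).le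
  apply tsum_nonneg
  intro i
  exact div_nonneg (by positivity) (sc_pos σ (k + i + 1)).le

lemma partial_bound (hξ : ∀ i, ξ i ≤ capB (σ i)) (k n : ℕ) :
    ∑ i ∈ Finset.range n, (ξ (k + i) : ℝ) / sc σ (k + i + 1)
      ≤ 1 / sc σ k - 1 / sc σ (k + n) := by
  induction n with
  | zero => simp
  | succ n ih =>
    rw [Finset.sum_range_succ]
    have hterm : (ξ (k + n) : ℝ) / sc σ (k + n + 1)
        ≤ 1 / sc σ (k + n) - 1 / sc σ (k + n + 1) := by
      have hb : (ξ (k + n) : ℝ) ≤ ratioB (σ (k + n)) - 1 := by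
        have h1 := hξ (k + n)
        have h2 : ((ξ (k+n) : ℤ) : ℝ) ≤ ((rI (σ (k+n)) - 1 : ℤ) : ℝ) := by
          exact_mod_cast le_trans (by exact_mod_cast h1) (le_of_eq (capB_cast _))
        rw [ratioB_cast]; push_cast at h2 ⊢; linarith
      have hsp := sc_pos σ (k + n)
      have hsp1 := sc_pos σ (k + n + 1)
      have hs : sc σ (k + n + 1) = ratioB (σ (k + n)) * sc σ (k + n) := sc_succ σ (k + n)
      rw [div_le_iff₀ hsp1, sub_mul, one_div, one_div, inv_mul_cancel₀ hsp1.ne', hs]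
      have hx : (sc σ (k+n))⁻¹ * (ratioB (σ (k+n)) * sc σ (k+n)) = ratioB (σ (k+n)) := by
        field_simp
      rw [hx]
      linarith
    have := ih
    rw [show k + (n+1) = k + n + 1 from by omega]
    linarith

lemma th_le_one (hξ : ∀ i, ξ i ≤ capB (σ i)) (k : ℕ) : th σ ξ k ≤ 1 := by
  unfold th
  have htl : tl σ ξ k ≤ 1 / sc σ k := by
    unfold tl
    apply Summable.tsum_le_of_sum_range_le (summable_tl σ ξ hξ k)
    intro n
    have h1 := partial_bound σ ξ hξ k n
    have h2 : 0 < 1 / sc σ (k+n) := one_div_pos.2 (sc_pos σ (k+n))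
    linarith
  have hsp := sc_pos σ k
  calc sc σ k * tl σ ξ k ≤ sc σ k * (1 / sc σ k) :=
        mul_le_mul_of_nonneg_left htl hsp.le
  _ = 1 := by field_simp

end Series

/-! ### tau, floors -/

section Tau

variable (M N : ℕ) (σ : ℕ → Bool) (a : ℝ) (ξ : ℕ → ℕ) (κ : ℕ)

def tau (k : ℕ) : ℝ := sc σ k * (N : ℝ) * a

def fl (k : ℕ) : ℤ := ⌊tau N σ a k⌋

lemma tau_succ (k : ℕ) : tau N σ a (k + 1) = ratioB (σ k) * tau N σ a k := by
  unfold tau; rw [sc_succ]; ring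

variable (hN : 1 ≤ N)
  (hirr : ∀ k : ℕ, ¬∃ m : ℤ, sc σ k * (N : ℝ) * a = (m : ℝ))
  (hξ : ∀ i, ξ i ≤ capB (σ i))
  (hexp : a = (-(M : ℝ) - 1 + (κ : ℝ)) / (N : ℝ) +
      1 / (N : ℝ) * ∑' i : ℕ, (ξ i : ℝ) / sc σ (i + 1))

set_option linter.unusedSectionVars false

include hN hξ hexp in
lemma tau_decomp : ∀ k, ∃ I : ℤ, tau N σ a k = (I : ℝ) + th σ ξ k := by
  have hN0 : (N : ℝ) ≠ 0 := by positivity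
  intro k
  induction k with
  | zero =>
    refine ⟨(κ : ℤ) - M - 1, ?_⟩
    have htl0 : th σ ξ 0 = ∑' i : ℕ, (ξ i : ℝ) / sc σ (i + 1) := by
      unfold th tl
      rw [sc_zero, one_mul]
      apply tsum_congr; intro i; rw [Nat.zero_add]
    unfold tau
    rw [sc_zero, one_mul, htl0, hexp]
    push_cast
    field_simp
    ring
  | succ k ih =>
    obtain ⟨I, hI⟩ := ih
    refine ⟨rI (σ k) * I + ξ k, ?_⟩
    rw [tau_succ, hI, mul_add]
    have h := th_rec σ ξ hξ k
    push_cast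
    rw [ratioB_cast] at h ⊢
    push_cast at h ⊢
    linarith

include hN hirr hξ hexp in
lemma tau_split : ∀ k, tau N σ a k = (fl N σ a k : ℝ) + th σ ξ k
    ∧ 0 < th σ ξ k ∧ th σ ξ k < 1 := by
  intro k
  obtain ⟨I, hI⟩ := tau_decomp M N σ a ξ κ hN hξ hexp k
  have h0 : 0 ≤ th σ ξ k := th_nonneg σ ξ k
  have h1 : th σ ξ k ≤ 1 := th_le_one σ ξ hξ k
  have hne0 : th σ ξ k ≠ 0 := by
    intro h
    exact hirr k ⟨I, by rw [show sc σ k * (N:ℝ) * a = tau N σ a k from rfl, hI, h, add_zero]⟩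
  have hne1 : th σ ξ k ≠ 1 := by
    intro h
    exact hirr k ⟨I + 1, by
      rw [show sc σ k * (N:ℝ) * a = tau N σ a k from rfl, hI, h]; push_cast; ring⟩
  have hth : 0 < th σ ξ k ∧ th σ ξ k < 1 :=
    ⟨lt_of_le_of_ne h0 (Ne.symm hne0), lt_of_le_of_ne h1 hne1⟩
  have hfl : fl N σ a k = I := by
    unfold fl
    rw [hI, add_comm, Int.floor_add_intCast, Int.floor_eq_zero_iff.2 ⟨hth.1.le, hth.2⟩, zero_add]
  exact ⟨by rw [hfl, hI], hth⟩

include hN hirr hξ hexp in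
lemma fl_bounds (k : ℕ) :
    (fl N σ a k : ℝ) < tau N σ a k ∧ tau N σ a k < (fl N σ a k : ℝ) + 1 := by
  obtain ⟨heq, h0, h1⟩ := tau_split M N σ a ξ κ hN hirr hξ hexp k
  constructor <;> linarith

include hN hirr hξ hexp in
lemma fl_succ (k : ℕ) : fl N σ a (k + 1) = rI (σ k) * fl N σ a k + ξ k := by
  obtain ⟨heq, h0, h1⟩ := tau_split M N σ a ξ κ hN hirr hξ hexp k
  obtain ⟨heq', h0', h1'⟩ := tau_split M N σ a ξ κ hN hirr hξ hexp (k + 1)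
  have hr := th_rec σ ξ hξ k
  have hts : tau N σ a (k+1) = ratioB (σ k) * tau N σ a k := tau_succ N σ a k
  rw [heq', heq] at hts
  rw [mul_add, hr] at hts
  have hcast : ((fl N σ a (k+1) : ℤ) : ℝ) = ((rI (σ k) * fl N σ a k + ξ k : ℤ) : ℝ) := by
    push_cast
    rw [ratioB_cast] at hts
    push_cast at hts
    linarith
  exact_mod_cast hcast

end Tau

/-! ### Integer digit values, word values -/

def eI (M N : ℕ) (d : ℤ × ℤ) : ℤ := d.1 * M - d.2 * N

def mw (M N : ℕ) (σ : ℕ → Bool) : (n : ℕ) → (Fin n → ℤ × ℤ) → ℤ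
  | 0, _ => 0
  | n + 1, w => rI (σ n) * mw M N σ n (fun i => w i.castSucc) + eI M N (w (Fin.last n))

lemma mw_snoc (M N : ℕ) (σ : ℕ → Bool) (n : ℕ) (w : Fin n → ℤ × ℤ) (d : ℤ × ℤ) :
    mw M N σ (n + 1) (Fin.snoc w d) = rI (σ n) * mw M N σ n w + eI M N d := by
  simp only [mw]
  simp

lemma eI_bounds (M N : ℕ) (b : Bool) (d : ℤ × ℤ) (hd : d ∈ DigB b) :
    -(capB b : ℤ) * N ≤ eI M N d ∧ eI M N d ≤ (capB b : ℤ) * M := by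
  have hM : (0:ℤ) ≤ (M:ℤ) := Int.ofNat_nonneg M
  have hNn : (0:ℤ) ≤ (N:ℤ) := Int.ofNat_nonneg N
  cases b
  · simp only [DigB, Dig0, Finset.mem_insert, Finset.mem_singleton] at hd
    rcases hd with h|h|h|h|h|h|h|h <;> subst h <;> simp [eI, capB] <;> omega
  · simp only [DigB, Dig1, Finset.mem_insert, Finset.mem_singleton] at hd
    rcases hd with h|h|h|h|h|h|h|h|h|h|h|h <;> subst h <;> simp [eI, capB] <;> omega

/-! ### Tcomp and PhiComp structure lemmas -/

lemma foldl_comp {α : Type*} (l : List (α → α)) (c : α → α) :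
    l.foldl (fun g f => f ∘ g) c = (l.foldl (fun g f => f ∘ g) id) ∘ c := by
  induction l generalizing c with
  | nil => simp
  | cons a l ih =>
    simp only [List.foldl_cons]
    rw [ih (a ∘ c), ih (a ∘ id)]
    rfl

lemma tcomp_snoc (M N : ℕ) (σ : ℕ → Bool) (n : ℕ) (w : Fin (n + 1) → ℤ × ℤ) :
    Tcomp M N σ w = Tmap M N (σ n) (w (Fin.last n)) ∘ Tcomp M N σ (fun i => w i.castSucc) := by
  unfold Tcomp
  rw [List.ofFn_succ']
  rw [List.concat_eq_append, List.foldl_append]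
  simp only [List.foldl_cons, List.foldl_nil]
  rfl

lemma tcomp_cons (M N : ℕ) (σ : ℕ → Bool) (n : ℕ) (w : Fin (n + 1) → ℤ × ℤ) :
    Tcomp M N σ w =
      Tcomp M N (fun i => σ (i + 1)) (fun i : Fin n => w i.succ) ∘ Tmap M N (σ 0) (w 0) := by
  unfold Tcomp
  rw [List.ofFn_succ]
  simp only [List.foldl_cons]
  rw [foldl_comp]
  rfl

lemma phicomp_cons (σ : ℕ → Bool) (n : ℕ) (w : Fin (n + 1) → ℤ × ℤ) :
    PhiComp σ w = Phi (σ 0) (w 0) ∘ PhiComp (fun i => σ (i + 1)) (fun i : Fin n => w i.succ) := by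
  unfold PhiComp
  rw [List.ofFn_succ]
  simp only [List.foldr_cons]
  rfl

lemma tcomp_eq (M N : ℕ) (hN : 1 ≤ N) (σ : ℕ → Bool) :
    ∀ (n : ℕ) (w : Fin n → ℤ × ℤ) (x : ℝ),
      Tcomp M N σ w x = sc σ n * x + (mw M N σ n w : ℝ) / N := by
  have hN0 : (N : ℝ) ≠ 0 := by positivity
  intro n
  induction n with
  | zero =>
    intro w x
    show (List.foldl _ id (List.ofFn _)) x = _
    simp [sc_zero, mw]
  | succ n ih =>
    intro w x
    rw [tcomp_snoc]
    show Tmap M N (σ n) (w (Fin.last n)) (Tcomp M N σ (fun i => w i.castSucc) x) = _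
    rw [ih (fun i => w i.castSucc) x]
    simp only [mw]
    unfold Tmap
    rw [sc_succ, ratioB_cast]
    unfold eI
    push_cast
    field_simp
    ring

/-! ### Geometry: line meets square -/

lemma phi_line (M N : ℕ) (b : Bool) (d : ℤ × ℤ) (x : ℝ) (S : Set (ℝ × ℝ)) :
    ((Phi b d '' S) ∩ Lline M N x).Nonempty ↔
      (S ∩ Lline M N (Tmap M N b d x)).Nonempty := by
  have hr := (ratioB_pos' b).ne'
  have key : ∀ s : ℝ × ℝ, Phi b d s ∈ Lline M N x ↔ s ∈ Lline M N (Tmap M N b d x) := by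
    intro s
    show (s.2 + (d.2:ℝ)) / ratioB b = (M:ℝ)/(N:ℝ) * ((s.1 + d.1) / ratioB b) + x ↔
      s.2 = (M:ℝ)/(N:ℝ) * s.1 + (ratioB b * x + (d.1:ℝ) * ((M:ℝ)/(N:ℝ)) - d.2)
    rw [div_eq_iff hr]
    have hcan : (M:ℝ)/(N:ℝ) * ((s.1 + d.1) / ratioB b) * ratioB b
        = (M:ℝ)/(N:ℝ) * (s.1 + d.1) := by
      rw [mul_assoc, div_mul_cancel₀ _ hr]
    constructor <;> intro h
    · rw [add_mul, hcan] at h; linarith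
    · rw [add_mul, hcan]; linarith
  constructor
  · rintro ⟨p, ⟨s, hs, rfl⟩, hl⟩
    exact ⟨s, hs, (key s).1 hl⟩
  · rintro ⟨s, hs, hl⟩
    exact ⟨Phi b d s, ⟨s, hs, rfl⟩, (key s).2 hl⟩

lemma base_line (M N : ℕ) (hN : 1 ≤ N) (x : ℝ) :
    (F0set ∩ Lline M N x).Nonempty ↔ x ∈ Jset M N := by
  have hNpos : (0:ℝ) < N := by positivity
  have hMN : (0:ℝ) ≤ (M:ℝ)/(N:ℝ) := by positivity
  constructor
  · rintro ⟨⟨p1, p2⟩, ⟨hp1, hp2⟩, hl⟩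
    simp only [Set.mem_Icc] at hp1 hp2
    have hl' : p2 = (M:ℝ)/(N:ℝ) * p1 + x := hl
    constructor
    · have h3 : (M:ℝ)/(N:ℝ) * p1 ≤ (M:ℝ)/(N:ℝ) := by nlinarith [hp1.1, hp1.2]
      have h4 : x ≥ -((M:ℝ)/(N:ℝ)) := by nlinarith [hp2.1]
      rw [neg_div]
      linarith
    · nlinarith [hp2.2, hp1.1]
  · rintro ⟨h1, h2⟩
    rw [neg_div] at h1
    by_cases hM : M = 0
    · subst hM
      refine ⟨(0, x), ⟨?_, ?_⟩, ?_⟩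
      · simp [Set.mem_Icc]
      · simp only [Set.mem_Icc]
        constructor
        · simpa using h1
        · exact h2
      · show x = ((0:ℕ):ℝ)/(N:ℝ) * 0 + x
        simp
    · have hMpos : (0:ℝ) < M := by
        have h0 : 0 < M := Nat.pos_of_ne_zero hM
        exact_mod_cast h0
      set c := max x 0 with hc
      have hc0 : 0 ≤ c := le_max_right _ _
      have hc1 : c ≤ 1 := max_le h2 zero_le_one
      have hcx : x ≤ c := le_max_left _ _
      have hcx2 : c - x ≤ (M:ℝ)/(N:ℝ) := by
        rcases max_cases x 0 with ⟨h, _⟩ | ⟨h, _⟩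
        · rw [hc, h]; simpa using hMN
        · rw [hc, h]; linarith
      refine ⟨((c - x) * N / M, c), ⟨?_, ?_⟩, ?_⟩
      · simp only [Set.mem_Icc]
        constructor
        · exact div_nonneg (mul_nonneg (by linarith) hNpos.le) hMpos.le
        · rw [div_le_one hMpos]
          exact (le_div_iff₀ hNpos).1 hcx2
      · simp only [Set.mem_Icc]; exact ⟨hc0, hc1⟩
      · show c = (M:ℝ)/(N:ℝ) * ((c - x) * N / M) + x
        field_simp
        ring

lemma line_iff (M N : ℕ) (hN : 1 ≤ N) :
    ∀ (n : ℕ) (σ : ℕ → Bool) (w : Fin n → ℤ × ℤ) (x : ℝ),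
      ((PhiComp σ w '' F0set) ∩ Lline M N x).Nonempty ↔ Tcomp M N σ w x ∈ Jset M N := by
  intro n
  induction n with
  | zero =>
    intro σ w x
    have h1 : PhiComp σ w = id := by
      unfold PhiComp
      simp
    have h2 : Tcomp M N σ w = id := by
      unfold Tcomp
      simp
    rw [h1, h2, Set.image_id]
    exact base_line M N hN x
  | succ n ih =>
    intro σ w x
    rw [phicomp_cons, tcomp_cons]
    rw [Set.image_comp]
    rw [phi_line]
    exact ih (fun i => σ (i + 1)) (fun i => w i.succ) (Tmap M N (σ 0) (w 0) x)

/-! ### Counting -/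

section Count

variable (M N : ℕ) (σ : ℕ → Bool) (a : ℝ) (ξ : ℕ → ℕ) (κ : ℕ)

def W (n : ℕ) : Finset (Fin n → ℤ × ℤ) := Fintype.piFinset fun i => DigB (σ i.1)

def cw (n : ℕ) (q : Fin (N + M)) : ℕ :=
  ((W σ n).filter (fun w => mw M N σ n w = ((q:ℕ):ℤ) - M - fl N σ a n)).card

lemma window_indicator (k : ℕ) (m : ℤ) (c : ℕ) :
    (if -(M:ℤ) - fl N σ a k ≤ m ∧ m ≤ (N:ℤ) - 1 - fl N σ a k then c else 0)
      = ∑ q : Fin (N + M), if m = ((q:ℕ):ℤ) - M - fl N σ a k then c else 0 := by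
  set F := fl N σ a k with hF
  split_ifs with h
  · have hnn : (0:ℤ) ≤ m + M + F := by omega
    have hq : ((m + M + F).toNat) < N + M := by omega
    rw [Finset.sum_eq_single (⟨(m + M + F).toNat, hq⟩ : Fin (N+M))]
    · rw [if_pos]
      show m = (((m + M + F).toNat : ℕ) : ℤ) - M - F
      rw [Int.toNat_of_nonneg hnn]
      ring
    · intro q _ hne
      rw [if_neg]
      intro hm
      apply hne
      apply Fin.ext
      show (q:ℕ) = (m + M + F).toNat
      omega
    · intro hmem
      exact absurd (Finset.mem_univ _) hmem
  · symm
    apply Finset.sum_eq_zero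
    intro q _
    rw [if_neg]
    intro hm
    have hqv : ((q:ℕ):ℤ) < (N:ℤ) + (M:ℤ) := by exact_mod_cast q.isLt
    have hq0 : (0:ℤ) ≤ ((q:ℕ):ℤ) := Int.ofNat_nonneg _
    omega

lemma no_d (b : Bool) (F ξv m q : ℤ) (hξv : 0 ≤ ξv ∧ ξv ≤ rI b - 1)
    (hq : 0 ≤ q ∧ q ≤ (N:ℤ) + M - 1)
    (hm : m < -(M:ℤ) - F ∨ (N:ℤ) - 1 - F < m)
    (d : ℤ × ℤ) (hd : d ∈ DigB b) :
    eI M N d ≠ q - M - (rI b * F + ξv) - rI b * m := by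
  obtain ⟨hl, hu⟩ := eI_bounds M N b d hd
  rw [capB_cast] at hl hu
  intro he
  cases b <;> simp only [rI, cond_false, cond_true] at hl hu hξv he <;> omega

lemma amat_entry (b : Bool) (ξk : ℕ) (F : ℤ) (p q : Fin (N + M)) :
    Amat M N b ξk p q
      = (((DigB b).filter (fun d => eI M N d
          = (((q:ℕ):ℤ) - M - (rI b * F + ξk)) - rI b * (((p:ℕ):ℤ) - M - F))).card : ℝ) := by
  cases b
  · show A0mat M N ξk p q = _
    unfold A0mat
    simp only [Matrix.of_apply]
    congr 1
    apply Finset.card_bij (fun d _ => d)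
    · intro d hd
      simp only [Finset.mem_filter] at hd ⊢
      refine ⟨hd.1, ?_⟩
      have h2 := hd.2
      simp only [eI, rI, cond_false, DigB] at h2 ⊢
      generalize hgen : d.1 * (M:ℤ) - d.2 * (N:ℤ) = e at h2 ⊢
      omega
    · intro d d' _ _ h; exact h
    · intro d hd
      refine ⟨d, ?_, rfl⟩
      simp only [Finset.mem_filter] at hd ⊢
      refine ⟨hd.1, ?_⟩
      have h2 := hd.2
      simp only [eI, rI, cond_false, DigB] at h2 ⊢
      generalize hgen : d.1 * (M:ℤ) - d.2 * (N:ℤ) = e at h2 ⊢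
      omega
  · show A1mat M N ξk p q = _
    unfold A1mat
    simp only [Matrix.of_apply]
    congr 1
    apply Finset.card_bij (fun d _ => d)
    · intro d hd
      simp only [Finset.mem_filter] at hd ⊢
      refine ⟨hd.1, ?_⟩
      have h2 := hd.2
      simp only [eI, rI, cond_true, DigB] at h2 ⊢
      generalize hgen : d.1 * (M:ℤ) - d.2 * (N:ℤ) = e at h2 ⊢
      omega
    · intro d d' _ _ h; exact h
    · intro d hd
      refine ⟨d, ?_, rfl⟩
      simp only [Finset.mem_filter] at hd ⊢
      refine ⟨hd.1, ?_⟩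
      have h2 := hd.2
      simp only [eI, rI, cond_true, DigB] at h2 ⊢
      generalize hgen : d.1 * (M:ℤ) - d.2 * (N:ℤ) = e at h2 ⊢
      omega

lemma snoc_mem_W (n : ℕ) (u : Fin n → ℤ × ℤ) (d : ℤ × ℤ)
    (hu : u ∈ W σ n) (hd : d ∈ DigB (σ n)) : Fin.snoc u d ∈ W σ (n+1) := by
  rw [W, Fintype.mem_piFinset] at hu ⊢
  intro i
  refine Fin.lastCases ?_ ?_ i
  · rw [Fin.snoc_last]
    exact hd
  · intro j
    rw [Fin.snoc_castSucc]
    exact hu j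

lemma card_succ_eq (n : ℕ) (P : (Fin (n+1) → ℤ × ℤ) → Prop) [DecidablePred P] :
    ((W σ (n+1)).filter P).card
      = (((W σ n) ×ˢ DigB (σ n)).filter (fun ud => P (Fin.snoc (α := fun _ => ℤ × ℤ) ud.1 ud.2))).card := by
  apply Finset.card_bij' (fun w _ => ((fun i => w i.castSucc), w (Fin.last n)))
    (fun ud _ => Fin.snoc (α := fun _ => ℤ × ℤ) ud.1 ud.2)
  · intro w hw
    simp only [Finset.mem_filter, Finset.mem_product] at hw ⊢
    obtain ⟨hw1, hw2⟩ := hw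
    rw [W, Fintype.mem_piFinset] at hw1
    refine ⟨⟨?_, hw1 (Fin.last n)⟩, ?_⟩
    · rw [W, Fintype.mem_piFinset]
      intro i
      exact hw1 i.castSucc
    · have : Fin.snoc (fun i => w i.castSucc) (w (Fin.last n)) = w := by
        funext i
        refine Fin.lastCases ?_ ?_ i
        · rw [Fin.snoc_last]
        · intro j
          rw [Fin.snoc_castSucc]
      rw [this]
      exact hw2
  · intro ud hud
    simp only [Finset.mem_filter, Finset.mem_product] at hud ⊢
    exact ⟨snoc_mem_W σ n ud.1 ud.2 hud.1.1 hud.1.2, hud.2⟩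
  · intro w _
    funext i
    refine Fin.lastCases ?_ ?_ i
    · rw [Fin.snoc_last]
    · intro j
      rw [Fin.snoc_castSucc]
  · intro ud _
    have h1 : (fun i : Fin n => Fin.snoc (α := fun _ => ℤ × ℤ) ud.1 ud.2 i.castSucc) = ud.1 := by
      funext j
      rw [Fin.snoc_castSucc]
    have h2 : Fin.snoc (α := fun _ => ℤ × ℤ) ud.1 ud.2 (Fin.last n) = ud.2 := Fin.snoc_last ..
    rw [h1, h2]

variable (hN : 1 ≤ N)
  (hirr : ∀ k : ℕ, ¬∃ m : ℤ, sc σ k * (N : ℝ) * a = (m : ℝ))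
  (hξ : ∀ i, ξ i ≤ capB (σ i))
  (hexp : a = (-(M : ℝ) - 1 + (κ : ℝ)) / (N : ℝ) +
      1 / (N : ℝ) * ∑' i : ℕ, (ξ i : ℝ) / sc σ (i + 1))

include hN hirr hξ hexp in
lemma J_win (k : ℕ) (m : ℤ) :
    (tau N σ a k + (m:ℝ)) / N ∈ Jset M N
      ↔ (-(M:ℤ) - fl N σ a k ≤ m ∧ m ≤ (N:ℤ) - 1 - fl N σ a k) := by
  obtain ⟨hb1, hb2⟩ := fl_bounds M N σ a ξ κ hN hirr hξ hexp k
  have hNpos : (0:ℝ) < N := by positivity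
  have hN0 : (N:ℝ) ≠ 0 := hNpos.ne'
  rw [Jset, Set.mem_Icc]
  constructor
  · rintro ⟨h1, h2⟩
    have h1' := mul_le_mul_of_nonneg_right h1 hNpos.le
    rw [div_mul_cancel₀ _ hN0, div_mul_cancel₀ _ hN0] at h1'
    have h2' := mul_le_mul_of_nonneg_right h2 hNpos.le
    rw [div_mul_cancel₀ _ hN0, one_mul] at h2'
    constructor
    · have hc : ((-(M:ℤ) - fl N σ a k - 1 : ℤ):ℝ) < (m:ℝ) := by push_cast; linarith
      have hc2 : -(M:ℤ) - fl N σ a k - 1 < m := by exact_mod_cast hc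
      omega
    · have hc : (m:ℝ) < (((N:ℤ) - fl N σ a k : ℤ):ℝ) := by push_cast; linarith
      have hc2 : m < (N:ℤ) - fl N σ a k := by exact_mod_cast hc
      omega
  · rintro ⟨h1, h2⟩
    have h1' : ((-(M:ℤ) - fl N σ a k : ℤ):ℝ) ≤ (m:ℝ) := by exact_mod_cast h1
    have h2' : (m:ℝ) ≤ (((N:ℤ) - 1 - fl N σ a k : ℤ):ℝ) := by exact_mod_cast h2
    push_cast at h1' h2'
    constructor
    · rw [div_le_div_iff₀ hNpos hNpos]
      nlinarith
    · rw [div_le_one hNpos]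
      linarith

include hN hirr hξ hexp in
lemma mem_J_iff (n : ℕ) (w : Fin n → ℤ × ℤ) :
    Tcomp M N σ w a ∈ Jset M N
      ↔ (-(M:ℤ) - fl N σ a n ≤ mw M N σ n w
          ∧ mw M N σ n w ≤ (N:ℤ) - 1 - fl N σ a n) := by
  have hNpos : (0:ℝ) < N := by positivity
  have hN0 : (N:ℝ) ≠ 0 := hNpos.ne'
  have hTc : Tcomp M N σ w a = (tau N σ a n + (mw M N σ n w : ℝ)) / N := by
    rw [tcomp_eq M N hN σ n w a]
    unfold tau
    field_simp
  rw [hTc]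
  exact J_win M N σ a ξ κ hN hirr hξ hexp n (mw M N σ n w)

include hN hirr hξ hexp in
lemma cw_eq (i₀ : Fin (N+M)) (hi₀ : ((i₀:ℕ):ℤ) = (M:ℤ) + fl N σ a 0) :
    ∀ n q, (cw M N σ a n q : ℝ) = Aprod M N σ ξ n i₀ q := by
  intro n
  induction n with
  | zero =>
    intro q
    have hA : Aprod M N σ ξ 0 = 1 := by simp [Aprod]
    rw [hA]
    unfold cw
    by_cases h : ((q:ℕ):ℤ) = (M:ℤ) + fl N σ a 0
    · have hq : q = i₀ := by
        apply Fin.ext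
        have hz : ((q:ℕ):ℤ) = ((i₀:ℕ):ℤ) := by omega
        exact_mod_cast hz
      subst hq
      rw [Matrix.one_apply_eq]
      have hall : ∀ w ∈ W σ 0, mw M N σ 0 w = ((q:ℕ):ℤ) - M - fl N σ a 0 := by
        intro w _
        show (0:ℤ) = _
        omega
      rw [Finset.filter_true_of_mem hall]
      rw [W]
      simp
    · have hne : i₀ ≠ q := by
        intro hc
        subst hc
        exact h hi₀
      rw [Matrix.one_apply_ne hne]
      have hnone : ∀ w ∈ W σ 0, ¬ (mw M N σ 0 w = ((q:ℕ):ℤ) - M - fl N σ a 0) := by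
        intro w _
        show ¬ ((0:ℤ) = _)
        omega
      rw [Finset.filter_false_of_mem hnone]
      simp
  | succ n ih =>
    intro q
    have hAs : Aprod M N σ ξ (n+1) = Aprod M N σ ξ n * Amat M N (σ n) (ξ n) := by
      unfold Aprod
      rw [List.range_succ, List.map_append, List.prod_append]
      simp
    rw [hAs, Matrix.mul_apply]
    have hfls : fl N σ a (n+1) = rI (σ n) * fl N σ a n + ξ n :=
      fl_succ M N σ a ξ κ hN hirr hξ hexp n
    set G : ℤ → ℕ := fun m => ((DigB (σ n)).filter (fun d => eI M N d
      = (((q:ℕ):ℤ) - (M:ℤ) - (rI (σ n) * fl N σ a n + (ξ n : ℤ))) - rI (σ n) * m)).card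
      with hG
    have hstep1 : cw M N σ a (n+1) q = ∑ u ∈ W σ n, G (mw M N σ n u) := by
      unfold cw
      rw [card_succ_eq]
      rw [Finset.card_filter, Finset.sum_product]
      apply Finset.sum_congr rfl
      intro u _
      rw [hG]
      beta_reduce
      rw [Finset.card_filter]
      apply Finset.sum_congr rfl
      intro d _
      apply if_congr _ rfl rfl
      rw [mw_snoc]
      constructor <;> intro h <;> linarith [hfls]
    have hvanish : ∀ m : ℤ,
        (¬ (-(M:ℤ) - fl N σ a n ≤ m ∧ m ≤ (N:ℤ) - 1 - fl N σ a n)) → G m = 0 := by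
      intro m hm
      rw [hG]
      beta_reduce
      rw [Finset.card_eq_zero, Finset.filter_eq_empty_iff]
      intro d hd
      apply no_d M N (σ n) (fl N σ a n) (ξ n) m ((q:ℕ):ℤ)
      · constructor
        · exact Int.ofNat_nonneg _
        · rw [← capB_cast]
          exact_mod_cast hξ n
      · constructor
        · exact Int.ofNat_nonneg _
        · have hql : ((q:ℕ):ℤ) < (N:ℤ) + M := by exact_mod_cast q.isLt
          omega
      · omega
      · exact hd
    have hstep2 : ∀ m : ℤ,
        G m = ∑ p : Fin (N+M),
          if m = ((p:ℕ):ℤ) - M - fl N σ a n then G (((p:ℕ):ℤ) - M - fl N σ a n) else 0 := by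
      intro m
      have h1 : G m = if -(M:ℤ) - fl N σ a n ≤ m ∧ m ≤ (N:ℤ) - 1 - fl N σ a n
          then G m else 0 := by
        split_ifs with h
        · rfl
        · exact hvanish m h
      rw [h1, window_indicator M N σ a n m (G m)]
      apply Finset.sum_congr rfl
      intro p _
      split_ifs with h
      · rw [h]
      · rfl
    have hstep3 : cw M N σ a (n+1) q
        = ∑ p : Fin (N+M), cw M N σ a n p * G (((p:ℕ):ℤ) - M - fl N σ a n) := by
      rw [hstep1]
      have hswap : ∑ u ∈ W σ n, G (mw M N σ n u)
          = ∑ u ∈ W σ n, ∑ p : Fin (N+M),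
              if mw M N σ n u = ((p:ℕ):ℤ) - M - fl N σ a n
              then G (((p:ℕ):ℤ) - M - fl N σ a n) else 0 := by
        apply Finset.sum_congr rfl
        intro u _
        exact hstep2 (mw M N σ n u)
      rw [hswap, Finset.sum_comm]
      apply Finset.sum_congr rfl
      intro p _
      rw [← Finset.sum_filter, Finset.sum_const, smul_eq_mul]
      rfl
    rw [hstep3]
    push_cast
    apply Finset.sum_congr rfl
    intro p _
    rw [ih p]
    congr 1
    rw [amat_entry M N (σ n) (ξ n) (fl N σ a n) p q]

end Count

end Stmt11Aux

/-- N_n^σ(a) as the entry sum of a row of the product of the A matrices. -/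
theorem stmt11 (σ : ℕ → Bool) (M N : ℕ) (hN : 1 ≤ N) (hMN : Nat.Coprime M N)
    (a : ℝ) (haJ : a ∈ Jset M N)
    (hirr : ∀ k : ℕ, ¬∃ m : ℤ, sc σ k * (N : ℝ) * a = (m : ℝ))
    (κ : ℕ) (hκ : 1 ≤ κ ∧ κ ≤ N + M)
    (haκ : a ∈ Set.Ico ((-(M : ℝ) - 1 + (κ : ℝ)) / (N : ℝ)) ((-(M : ℝ) + (κ : ℝ)) / (N : ℝ)))
    (ξ : ℕ → ℕ) (hξ : ∀ i, ξ i ≤ capB (σ i))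
    (hexp : a = (-(M : ℝ) - 1 + (κ : ℝ)) / (N : ℝ) +
      1 / (N : ℝ) * ∑' i : ℕ, (ξ i : ℝ) / sc σ (i + 1))
    (Γe : Fin (N + M) → ℝ) (hmono : StrictMono Γe) (hrange : Set.range Γe = GammaSet M N a)
    (i₀ : Fin (N + M)) (hi₀ : Γe i₀ = a)
    (n : ℕ) (hn : 1 ≤ n) :
    (Ncount M N σ n a : ℝ) = ∑ q, Aprod M N σ ξ n i₀ q := by
  classical
  have hNpos : (0:ℝ) < N := by positivity
  have hN0 : (N:ℝ) ≠ 0 := hNpos.ne'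
  have htau0 : Stmt11Aux.tau N σ a 0 = (N:ℝ) * a := by
    unfold Stmt11Aux.tau
    rw [Stmt11Aux.sc_zero, one_mul]
  have ha_eq : ∀ i : ℤ, a + (i:ℝ)/N = (Stmt11Aux.tau N σ a 0 + (i:ℝ))/N := by
    intro i
    rw [htau0]
    field_simp
  -- the candidate enumeration of Γ_a
  have hφmono : StrictMono (fun p : Fin (N+M) =>
      a + ((((p:ℕ):ℤ) - M - Stmt11Aux.fl N σ a 0 : ℤ) : ℝ)/N) := by
    intro p q hpq
    apply (add_lt_add_iff_left a).2
    rw [div_lt_div_iff₀ hNpos hNpos]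
    have hlt : ((p:ℕ):ℤ) < ((q:ℕ):ℤ) := by exact_mod_cast hpq
    have hltR : ((((p:ℕ):ℤ) - M - Stmt11Aux.fl N σ a 0 : ℤ):ℝ)
        < ((((q:ℕ):ℤ) - M - Stmt11Aux.fl N σ a 0 : ℤ):ℝ) := by
      exact_mod_cast (by omega : (((p:ℕ):ℤ) - M - Stmt11Aux.fl N σ a 0)
        < (((q:ℕ):ℤ) - M - Stmt11Aux.fl N σ a 0))
    nlinarith
  have hφrange : Set.range (fun p : Fin (N+M) =>
      a + ((((p:ℕ):ℤ) - M - Stmt11Aux.fl N σ a 0 : ℤ) : ℝ)/N) = GammaSet M N a := by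
    ext y
    simp only [Set.mem_range, GammaSet, Set.mem_setOf_eq]
    constructor
    · rintro ⟨p, rfl⟩
      constructor
      · exact ⟨((p:ℕ):ℤ) - M - Stmt11Aux.fl N σ a 0, rfl⟩
      · rw [ha_eq, Stmt11Aux.J_win M N σ a ξ κ hN hirr hξ hexp 0]
        have hpv : ((p:ℕ):ℤ) < (N:ℤ) + M := by exact_mod_cast p.isLt
        have hp0 : (0:ℤ) ≤ ((p:ℕ):ℤ) := Int.ofNat_nonneg _
        omega
    · rintro ⟨⟨i, hy⟩, hJ⟩
      subst hy
      rw [ha_eq i, Stmt11Aux.J_win M N σ a ξ κ hN hirr hξ hexp 0] at hJ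
      have hnn : (0:ℤ) ≤ i + M + Stmt11Aux.fl N σ a 0 := by omega
      have hlt : (i + M + Stmt11Aux.fl N σ a 0).toNat < N + M := by omega
      refine ⟨⟨(i + M + Stmt11Aux.fl N σ a 0).toNat, hlt⟩, ?_⟩
      have hval : ((((i + M + Stmt11Aux.fl N σ a 0).toNat : ℕ) : ℤ)
          - M - Stmt11Aux.fl N σ a 0 : ℤ) = i := by
        rw [Int.toNat_of_nonneg hnn]
        ring
      show a + ((((i + M + Stmt11Aux.fl N σ a 0).toNat : ℕ) : ℤ)
          - M - Stmt11Aux.fl N σ a 0 : ℤ) / N = a + (i:ℝ)/N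
      rw [hval]
  have hΓφ : Γe = (fun p : Fin (N+M) =>
      a + ((((p:ℕ):ℤ) - M - Stmt11Aux.fl N σ a 0 : ℤ) : ℝ)/N) := by
    have hwf : WellFoundedLT (Fin (N+M)) := inferInstance
    exact (hmono.range_inj hφmono).1 (hrange.trans hφrange.symm)
  have hi0 : ((i₀:ℕ):ℤ) = (M:ℤ) + Stmt11Aux.fl N σ a 0 := by
    have h := hi₀
    rw [hΓφ] at h
    have hx : ((((i₀:ℕ):ℤ) - M - Stmt11Aux.fl N σ a 0 : ℤ):ℝ) / N = 0 := by
      have := h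
      simp only at this
      linarith
    rw [div_eq_zero_iff] at hx
    have hx2 := hx.resolve_right hN0
    have hx3 : (((i₀:ℕ):ℤ) - M - Stmt11Aux.fl N σ a 0 : ℤ) = 0 := by exact_mod_cast hx2
    omega
  -- express Ncount as a Finset card
  have hset : {w : Fin n → ℤ × ℤ |
      (∀ i, w i ∈ DigB (σ i.1)) ∧ (PhiComp σ w '' F0set ∩ Lline M N a).Nonempty}
      = ↑((Stmt11Aux.W σ n).filter (fun w => Tcomp M N σ w a ∈ Jset M N)) := by
    ext w
    simp only [Set.mem_setOf_eq, Finset.coe_filter, Stmt11Aux.W, Fintype.mem_piFinset]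
    constructor
    · rintro ⟨h1, h2⟩
      exact ⟨h1, (Stmt11Aux.line_iff M N hN n σ w a).1 h2⟩
    · rintro ⟨h1, h2⟩
      exact ⟨h1, (Stmt11Aux.line_iff M N hN n σ w a).2 h2⟩
  have hcount : Ncount M N σ n a
      = ((Stmt11Aux.W σ n).filter (fun w => Tcomp M N σ w a ∈ Jset M N)).card := by
    unfold Ncount
    rw [hset, Set.ncard_coe_finset]
  have hcard : ((Stmt11Aux.W σ n).filter (fun w => Tcomp M N σ w a ∈ Jset M N)).card
      = ∑ q : Fin (N+M), Stmt11Aux.cw M N σ a n q := by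
    rw [Finset.card_filter]
    have hpt : ∀ w ∈ Stmt11Aux.W σ n, (if Tcomp M N σ w a ∈ Jset M N then 1 else 0)
        = ∑ q : Fin (N+M), if Stmt11Aux.mw M N σ n w
            = ((q:ℕ):ℤ) - M - Stmt11Aux.fl N σ a n then 1 else 0 := by
      intro w _
      rw [if_congr (Stmt11Aux.mem_J_iff M N σ a ξ κ hN hirr hξ hexp n w) rfl rfl]
      exact Stmt11Aux.window_indicator M N σ a n (Stmt11Aux.mw M N σ n w) 1
    rw [Finset.sum_congr rfl hpt, Finset.sum_comm]
    apply Finset.sum_congr rfl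
    intro q _
    unfold Stmt11Aux.cw
    rw [Finset.card_filter]
  rw [hcount, hcard]
  push_cast
  apply Finset.sum_congr rfl
  intro q _
  exact Stmt11Aux.cw_eq M N σ a ξ κ hN hirr hξ hexp i₀ hi0 n q
end
end
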